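/- arXiv:quant-ph/0507141 — 5 statements merged into one kernel-verified Lean document; each statement's English description precedes it below -/
import Mathlib

section
/- Let H be a finite-dimensional Hilbert space of dimension n. If F: L(H) → L(H) is a unit-preserving completely positive map of the form F(T) = Σ_{i=1}^m ρ_i(T) G_i, where each ρ_i is a state (positive unital linear functional) on L(H) and the G_i are positive operators of norm ≤ 1 with Σ_i G_i = I, then the trace of F as a linear operator on L(H) satisfies tr_oper(F) ≤ n. -/
open scoped ComplexOrder
open scoped Matrix

/-- The operator (spectral) norm of a matrix, via its action on Euclidean space. -/
noncomputable def opNorm {n : ℕ} (A : Matrix (Fin n) (Fin n) ℂ) : ℝ :=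
  ‖Matrix.toEuclideanCLM (𝕜 := ℂ) A‖

attribute [local instance] Matrix.frobeniusSeminormedAddCommGroup

lemma trace_conjTranspose_mul {n : ℕ} (M : Matrix (Fin n) (Fin n) ℂ) :
    (Mᴴ * M).trace = ((‖M‖ ^ 2 : ℝ) : ℂ) := by
  have h : (Mᴴ * M).trace = ((∑ j, ∑ k, ‖M j k‖ ^ 2 : ℝ) : ℂ) := by
    simp only [Matrix.trace, Matrix.diag, Matrix.mul_apply, Matrix.conjTranspose_apply]
    rw [Finset.sum_comm]
    push_cast
    refine Finset.sum_congr rfl fun j _ => Finset.sum_congr rfl fun k _ => ?_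
    rw [mul_comm, show (star (M j k)) = (starRingEnd ℂ) (M j k) from rfl,
      Complex.mul_conj']
  rw [h]
  norm_cast
  rw [Matrix.frobenius_norm_def, ← Real.sqrt_eq_rpow, Real.sq_sqrt (by positivity)]
  refine Finset.sum_congr rfl fun j _ => Finset.sum_congr rfl fun k _ => ?_
  rw [← Real.rpow_natCast]
  norm_num

lemma trace_mul_le_trace_mul_trace {n : ℕ} {A B : Matrix (Fin n) (Fin n) ℂ}
    (hA : A.PosSemidef) (hB : B.PosSemidef) :
    (A * B).trace ≤ A.trace * B.trace := by
  obtain ⟨C, rfl⟩ : ∃ C : Matrix (Fin n) (Fin n) ℂ, A = Cᴴ * C := by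
    open scoped MatrixOrder in
    obtain ⟨C, hC⟩ := CStarAlgebra.nonneg_iff_eq_star_mul_self.mp hA.nonneg
    exact ⟨C, hC⟩
  obtain ⟨D, rfl⟩ : ∃ D : Matrix (Fin n) (Fin n) ℂ, B = Dᴴ * D := by
    open scoped MatrixOrder in
    obtain ⟨D, hD⟩ := CStarAlgebra.nonneg_iff_eq_star_mul_self.mp hB.nonneg
    exact ⟨D, hD⟩
  have key : (Cᴴ * C * (Dᴴ * D)).trace = ((C * Dᴴ)ᴴ * (C * Dᴴ)).trace := by
    rw [Matrix.conjTranspose_mul, Matrix.conjTranspose_conjTranspose,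
      show Cᴴ * C * (Dᴴ * D) = (Cᴴ * C * Dᴴ) * D by simp [mul_assoc],
      Matrix.trace_mul_comm]
    simp [mul_assoc]
  rw [key, trace_conjTranspose_mul, trace_conjTranspose_mul, trace_conjTranspose_mul,
    ← Complex.ofReal_mul, Complex.real_le_real]
  calc ‖C * Dᴴ‖ ^ 2 ≤ (‖C‖ * ‖Dᴴ‖) ^ 2 := by
        apply pow_le_pow_left₀ (norm_nonneg _) (Matrix.frobenius_norm_mul C Dᴴ)
      _ = ‖C‖ ^ 2 * ‖D‖ ^ 2 := by rw [Matrix.frobenius_norm_conjTranspose]; ring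

lemma repr_stdBasis {n : ℕ} (M : Matrix (Fin n) (Fin n) ℂ) (p : Fin n × Fin n) :
    (Matrix.stdBasis ℂ (Fin n) (Fin n)).repr M p = M p.1 p.2 := by
  have hM : M = ∑ q : Fin n × Fin n, M q.1 q.2 • Matrix.stdBasis ℂ (Fin n) (Fin n) q := by
    conv_rhs => rw [← Finset.univ_product_univ]
    rw [Finset.sum_product]
    conv_lhs => rw [Matrix.matrix_eq_sum_single M]
    refine Finset.sum_congr rfl fun i _ => Finset.sum_congr rfl fun j _ => ?_
    rw [Matrix.stdBasis_eq_single, Matrix.smul_single, smul_eq_mul, mul_one]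
  conv_lhs => rw [hM]
  simp [Finsupp.single_apply]


/-- If `F : L(H) → L(H)` (here `L(H)` is the algebra of `n × n` complex
matrices, `H` of dimension `n > 0`) is a unit-preserving completely positive map of the
form `F(T) = Σᵢ ρᵢ(T) Gᵢ`, where each `ρᵢ(T) = tr(T Sᵢ)` is a state (with `Sᵢ ≥ 0`,
`tr Sᵢ = 1`) and the `Gᵢ ≥ 0` have operator norm `≤ 1` and sum to `I`, then the trace of
`F` as a linear operator on the `n²`-dimensional space `L(H)` satisfies `tr_oper(F) ≤ n`. -/
theorem trace_of_abelian_factorizable_le_dim {n m : ℕ} (hn : 0 < n)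
    (F : Matrix (Fin n) (Fin n) ℂ →ₗ[ℂ] Matrix (Fin n) (Fin n) ℂ)
    (S G : Fin m → Matrix (Fin n) (Fin n) ℂ)
    (hS : ∀ i, (S i).PosSemidef) (hStr : ∀ i, (S i).trace = 1)
    (hG : ∀ i, (G i).PosSemidef) (hGnorm : ∀ i, opNorm (G i) ≤ 1)
    (hGsum : ∑ i, G i = 1)
    (hF : ∀ T, F T = ∑ i, (T * S i).trace • G i) :
    LinearMap.trace ℂ (Matrix (Fin n) (Fin n) ℂ) F ≤ (n : ℂ) := by
  have htr : LinearMap.trace ℂ (Matrix (Fin n) (Fin n) ℂ) F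
      = ∑ l, (G l * S l).trace := by
    rw [LinearMap.trace_eq_matrix_trace ℂ (Matrix.stdBasis ℂ (Fin n) (Fin n)) F]
    rw [Matrix.trace]
    simp only [Matrix.diag, LinearMap.toMatrix_apply]
    have step : ∀ p : Fin n × Fin n,
        (Matrix.stdBasis ℂ (Fin n) (Fin n)).repr (F (Matrix.stdBasis ℂ (Fin n) (Fin n) p)) p
          = ∑ l, S l p.2 p.1 * G l p.1 p.2 := by
      intro p
      rw [repr_stdBasis, hF, Matrix.stdBasis_eq_single]
      rw [Matrix.sum_apply]  -- entries of sum
      refine Finset.sum_congr rfl fun l _ => ?_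
      have htrE : (Matrix.single p.1 p.2 (1:ℂ) * S l).trace = S l p.2 p.1 := by
        rw [Matrix.trace]
        rw [show (Matrix.diag (Matrix.single p.1 p.2 (1:ℂ) * S l))
            = fun k => (Matrix.single p.1 p.2 (1:ℂ) * S l) k k from rfl]
        rw [Finset.sum_eq_single p.1]
        · simp
        · intro k _ hk
          simp [hk]
        · simp
      rw [htrE, Matrix.smul_apply, smul_eq_mul]
    rw [Finset.sum_congr rfl (fun p _ => step p)]
    rw [Finset.sum_comm]
    refine Finset.sum_congr rfl fun l _ => ?_
    rw [← Finset.univ_product_univ, Finset.sum_product]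
    rw [Matrix.trace]
    simp only [Matrix.diag, Matrix.mul_apply]
    exact Finset.sum_congr rfl fun i _ => Finset.sum_congr rfl fun j _ => mul_comm _ _
  rw [htr]
  calc ∑ l, (G l * S l).trace ≤ ∑ l, (G l).trace * (S l).trace :=
        Finset.sum_le_sum fun l _ => trace_mul_le_trace_mul_trace (hG l) (hS l)
    _ = ∑ l, (G l).trace := by simp [hStr]
    _ = (n : ℂ) := by
        rw [← Matrix.trace_sum, hGsum]
        simp [Matrix.trace_one]
end

section
/- Let H be a finite-dimensional Hilbert space of dimension n. If F: L(H) → L(H) is a unit-preserving completely positive map that factors through a finite-dimensional abelian von Neumann algebra (equivalently, has the form F(T) = Σ_{i=1}^m ρ_i(T) G_i with states ρ_i and positive operators G_i summing to I), then the operator norm of I − F on L(H) with the Hilbert–Schmidt (Schatten 2) norm satisfies ‖I − F‖_{2→2} ≥ 1 − 1/n. -/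
open scoped ComplexOrder Matrix

/-- The Schatten 2- (Hilbert–Schmidt/Frobenius) norm of a matrix: `‖T‖₂ = √tr(T†T)`. -/
noncomputable def frobNorm {n : ℕ} (A : Matrix (Fin n) (Fin n) ℂ) : ℝ :=
  Real.sqrt ((Aᴴ * A).trace.re)

/-- The operator norm `‖F‖_{2→2}` of a map on matrices, where the space of matrices
carries the Hilbert–Schmidt (Schatten 2) norm. -/
noncomputable def map22Norm {n : ℕ}
    (F : Matrix (Fin n) (Fin n) ℂ → Matrix (Fin n) (Fin n) ℂ) : ℝ :=
  sSup {r : ℝ | ∃ T : Matrix (Fin n) (Fin n) ℂ, frobNorm T ≤ 1 ∧ r = frobNorm (F T)}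

namespace TwoTwoAux

open Matrix Complex

variable {n : ℕ}

lemma trace_conjTranspose_mul (A B : Matrix (Fin n) (Fin n) ℂ) :
    (Aᴴ * B).trace = ∑ j, ∑ k, (starRingEnd ℂ) (A k j) * B k j := by
  simp [Matrix.trace, Matrix.diag, Matrix.mul_apply, Matrix.conjTranspose_apply]

/-- The vectorization linear equivalence to Euclidean space. -/
noncomputable def V (n : ℕ) : Matrix (Fin n) (Fin n) ℂ ≃ₗ[ℂ] EuclideanSpace ℂ (Fin n × Fin n) :=
  (LinearEquiv.curry ℂ ℂ (Fin n) (Fin n)).symm.trans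
    (WithLp.linearEquiv 2 ℂ ((Fin n × Fin n) → ℂ)).symm

lemma V_apply (A : Matrix (Fin n) (Fin n) ℂ) (p : Fin n × Fin n) : V n A p = A p.1 p.2 := rfl

lemma re_trace_self (A : Matrix (Fin n) (Fin n) ℂ) :
    (Aᴴ * A).trace.re = ∑ p : Fin n × Fin n, ‖A p.1 p.2‖ ^ 2 := by
  rw [trace_conjTranspose_mul, Complex.re_sum, Fintype.sum_prod_type, Finset.sum_comm]
  refine Finset.sum_congr rfl fun x _ => ?_
  rw [Complex.re_sum]
  refine Finset.sum_congr rfl fun y _ => ?_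
  rw [RCLike.conj_mul]
  norm_cast

lemma frob_eq_norm (A : Matrix (Fin n) (Fin n) ℂ) : frobNorm A = ‖V n A‖ := by
  rw [frobNorm, EuclideanSpace.norm_eq, re_trace_self]
  rfl

lemma inner_V (A B : Matrix (Fin n) (Fin n) ℂ) :
    (inner ℂ (V n A) (V n B) : ℂ) = (Aᴴ * B).trace := by
  rw [trace_conjTranspose_mul, PiLp.inner_apply]
  simp only [RCLike.inner_apply, V_apply]
  rw [Fintype.sum_prod_type]
  rw [Finset.sum_comm]
  exact Finset.sum_congr rfl fun _ _ => Finset.sum_congr rfl fun _ _ => mul_comm _ _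


lemma trace_stdBasisMatrix_mul (j k : Fin n) (A : Matrix (Fin n) (Fin n) ℂ) :
    (Matrix.single j k 1 * A).trace = A k j := by
  simp [Matrix.trace, Matrix.diag, Matrix.mul_apply, Matrix.single, ite_and]

lemma conjTranspose_stdBasisMatrix (j k : Fin n) :
    (Matrix.single j k (1:ℂ))ᴴ = Matrix.single k j 1 := by
  ext a b
  simp [Matrix.single, Matrix.conjTranspose_apply, apply_ite, and_comm]

lemma re_trace_conj_self_nonneg (X : Matrix (Fin n) (Fin n) ℂ) :
    0 ≤ ((Xᴴ * X).trace).re := by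
  rw [re_trace_self]
  positivity

lemma trace_mul_psd_re_nonneg {A B : Matrix (Fin n) (Fin n) ℂ}
    (hA : A.PosSemidef) (hB : B.PosSemidef) : 0 ≤ ((A * B).trace).re := by
  obtain ⟨C, rfl⟩ : ∃ C : Matrix (Fin n) (Fin n) ℂ, A = Cᴴ * C := by
    open scoped MatrixOrder in exact CStarAlgebra.nonneg_iff_eq_star_mul_self.mp hA.nonneg
  obtain ⟨D, rfl⟩ : ∃ D : Matrix (Fin n) (Fin n) ℂ, B = Dᴴ * D := by
    open scoped MatrixOrder in exact CStarAlgebra.nonneg_iff_eq_star_mul_self.mp hB.nonneg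
  have h1 : Cᴴ * C * (Dᴴ * D) = Cᴴ * (C * Dᴴ * D) := by
    simp [Matrix.mul_assoc]
  have h2 : C * Dᴴ * D * Cᴴ = (C * Dᴴ) * (C * Dᴴ)ᴴ := by
    rw [Matrix.conjTranspose_mul, Matrix.conjTranspose_conjTranspose]
    simp [Matrix.mul_assoc]
  rw [h1, Matrix.trace_mul_comm, h2]
  simpa using re_trace_conj_self_nonneg ((C * Dᴴ)ᴴ)

lemma psd_one_sub {S : Matrix (Fin n) (Fin n) ℂ} (hS : S.PosSemidef) (htr : S.trace = 1) :
    (1 - S).PosSemidef := by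
  have hH : S.IsHermitian := hS.1
  set U : Matrix (Fin n) (Fin n) ℂ := (hH.eigenvectorUnitary : Matrix (Fin n) (Fin n) ℂ) with hUdef
  have hU : U * star U = 1 := Matrix.mem_unitaryGroup_iff.mp hH.eigenvectorUnitary.2
  have hU' : star U * U = 1 := Matrix.mem_unitaryGroup_iff'.mp hH.eigenvectorUnitary.2
  have hspec : S = U * Matrix.diagonal (RCLike.ofReal ∘ hH.eigenvalues) * star U :=
    hH.spectral_theorem
  have hsum : ∑ i, hH.eigenvalues i = 1 := by
    have h1 : S.trace = ∑ i, (hH.eigenvalues i : ℂ) := by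
      conv_lhs => rw [hspec]
      rw [Matrix.trace_mul_cycle, hU', one_mul, Matrix.trace_diagonal]
      simp
    rw [htr] at h1
    have h2 : ((∑ i, hH.eigenvalues i : ℝ) : ℂ) = 1 := by
      push_cast
      exact h1.symm
    exact_mod_cast h2
  have hle : ∀ i, hH.eigenvalues i ≤ 1 := by
    intro i
    rw [← hsum]
    exact Finset.single_le_sum (fun j _ => hS.eigenvalues_nonneg j) (Finset.mem_univ i)
  have key : 1 - S = U * Matrix.diagonal (fun i => ((1 - hH.eigenvalues i : ℝ) : ℂ)) * star U := by
    have hd : Matrix.diagonal (fun i => ((1 - hH.eigenvalues i : ℝ) : ℂ))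
        = 1 - Matrix.diagonal (RCLike.ofReal ∘ hH.eigenvalues) := by
      ext a b
      rcases eq_or_ne a b with h | h
      · subst h
        simp [Matrix.diagonal_apply_eq, Matrix.one_apply_eq, Function.comp]
      · simp [Matrix.diagonal_apply_ne _ h, Matrix.one_apply_ne h]
    rw [hd, Matrix.mul_sub, Matrix.sub_mul, Matrix.mul_one, hU, ← hspec]
  rw [key, show star U = Uᴴ from rfl]
  exact Matrix.PosSemidef.mul_mul_conjTranspose_same
    (Matrix.PosSemidef.diagonal fun i => by
      simpa using Complex.zero_le_real.mpr (sub_nonneg.mpr (hle i))) U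

end TwoTwoAux

/-- Let `H` be a finite-dimensional Hilbert space of dimension `n`
(operators modelled as `n × n` complex matrices). If `F : L(H) → L(H)` is a
unit-preserving completely positive map which factors through a finite-dimensional
abelian von Neumann algebra, i.e. has the form `F(T) = Σᵢ tr(T Sᵢ) Gᵢ` with states
`Sᵢ ≥ 0`, `tr Sᵢ = 1` and positive `Gᵢ` of norm `≤ 1` summing to `I`, then
`‖I − F‖_{2→2} ≥ 1 − 1/n`. -/
theorem two_two_norm_id_sub_abelian_factorizable {n m : ℕ} (hn : 0 < n)
    (F : Matrix (Fin n) (Fin n) ℂ →ₗ[ℂ] Matrix (Fin n) (Fin n) ℂ)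
    (S G : Fin m → Matrix (Fin n) (Fin n) ℂ)
    (hS : ∀ i, (S i).PosSemidef) (hStr : ∀ i, (S i).trace = 1)
    (hG : ∀ i, (G i).PosSemidef)
    (hGnorm : ∀ i, ‖Matrix.toEuclideanCLM (𝕜 := ℂ) (G i)‖ ≤ 1)
    (hGsum : ∑ i, G i = 1)
    (hF : ∀ T, F T = ∑ i, (T * S i).trace • G i) :
    1 - 1 / (n : ℝ) ≤ map22Norm (fun T => T - F T) := by
  classical
  have hn' : (0:ℝ) < n := by exact_mod_cast hn
  -- boundedness of the defining set
  set L : EuclideanSpace ℂ (Fin n × Fin n) →ₗ[ℂ] EuclideanSpace ℂ (Fin n × Fin n) :=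
    (TwoTwoAux.V n).toLinearMap ∘ₗ (LinearMap.id - F) ∘ₗ (TwoTwoAux.V n).symm.toLinearMap with hL
  set Lc : EuclideanSpace ℂ (Fin n × Fin n) →L[ℂ] EuclideanSpace ℂ (Fin n × Fin n) :=
    LinearMap.toContinuousLinearMap L with hLc
  have hLapp : ∀ T : Matrix (Fin n) (Fin n) ℂ,
      Lc (TwoTwoAux.V n T) = TwoTwoAux.V n (T - F T) := by
    intro T
    simp [hLc, hL, LinearMap.sub_apply]
  have hbdd : BddAbove {r : ℝ | ∃ T : Matrix (Fin n) (Fin n) ℂ,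
      frobNorm T ≤ 1 ∧ r = frobNorm ((fun T => T - F T) T)} := by
    refine ⟨‖Lc‖, ?_⟩
    rintro r ⟨T, hT, rfl⟩
    calc frobNorm ((fun T => T - F T) T) = ‖Lc (TwoTwoAux.V n T)‖ := by
          simp only []
          rw [TwoTwoAux.frob_eq_norm, hLapp]
      _ ≤ ‖Lc‖ * ‖TwoTwoAux.V n T‖ := Lc.le_opNorm _
      _ ≤ ‖Lc‖ * 1 := by
          refine mul_le_mul_of_nonneg_left ?_ (norm_nonneg _)
          rw [← TwoTwoAux.frob_eq_norm]
          exact hT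
      _ = ‖Lc‖ := mul_one _
  -- the averaged quantity
  set f : Fin n × Fin n → ℝ := fun p =>
    (((Matrix.single p.1 p.2 (1:ℂ))ᴴ * F (Matrix.single p.1 p.2 1)).trace).re
    with hfdef
  have hfp : ∀ p : Fin n × Fin n,
      f p = ∑ i, ((S i) p.2 p.1 * (G i) p.1 p.2).re := by
    intro p
    rw [hfdef]
    simp only []
    rw [hF, Finset.mul_sum, Matrix.trace_sum, Complex.re_sum]
    refine Finset.sum_congr rfl fun i _ => ?_
    rw [mul_smul_comm, Matrix.trace_smul, smul_eq_mul,
      TwoTwoAux.trace_stdBasisMatrix_mul, TwoTwoAux.conjTranspose_stdBasisMatrix,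
      TwoTwoAux.trace_stdBasisMatrix_mul]
  have hsumf : ∑ p : Fin n × Fin n, f p ≤ (n:ℝ) := by
    have h2 : ∀ i, ∑ p : Fin n × Fin n, ((S i) p.2 p.1 * (G i) p.1 p.2).re
        = ((S i * G i).trace).re := by
      intro i
      rw [Matrix.trace, Complex.re_sum, Fintype.sum_prod_type, Finset.sum_comm]
      refine Finset.sum_congr rfl fun a _ => ?_
      rw [Matrix.diag, Matrix.mul_apply, Complex.re_sum]
    have h3 : ∀ i, ((S i * G i).trace).re ≤ ((G i).trace).re := by
      intro i
      have h0 : 0 ≤ (((1 - S i) * G i).trace).re :=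
        TwoTwoAux.trace_mul_psd_re_nonneg
          (TwoTwoAux.psd_one_sub (hS i) (hStr i)) (hG i)
      have heq : ((1 - S i) * G i).trace = (G i).trace - (S i * G i).trace := by
        rw [Matrix.sub_mul, Matrix.one_mul, Matrix.trace_sub]
      rw [heq, Complex.sub_re] at h0
      linarith
    have h4 : ∑ i, ((G i).trace).re = (n:ℝ) := by
      rw [← Complex.re_sum, ← Matrix.trace_sum, hGsum, Matrix.trace_one]
      simp
    calc ∑ p : Fin n × Fin n, f p
        = ∑ p : Fin n × Fin n, ∑ i, ((S i) p.2 p.1 * (G i) p.1 p.2).re :=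
          Finset.sum_congr rfl fun p _ => hfp p
      _ = ∑ i, ∑ p : Fin n × Fin n, ((S i) p.2 p.1 * (G i) p.1 p.2).re := Finset.sum_comm
      _ = ∑ i, ((S i * G i).trace).re := Finset.sum_congr rfl fun i _ => h2 i
      _ ≤ ∑ i, ((G i).trace).re := Finset.sum_le_sum fun i _ => h3 i
      _ = (n:ℝ) := h4
  -- pick a good matrix unit
  obtain ⟨p, hp⟩ : ∃ p : Fin n × Fin n, f p ≤ 1 / n := by
    by_contra h
    push_neg at h
    have hne : (Finset.univ : Finset (Fin n × Fin n)).Nonempty := by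
      refine ⟨(⟨0, hn⟩, ⟨0, hn⟩), Finset.mem_univ _⟩
    have hlt : ∑ _p : Fin n × Fin n, (1/(n:ℝ)) < ∑ p : Fin n × Fin n, f p :=
      Finset.sum_lt_sum_of_nonempty hne fun p _ => h p
    have hcst : ∑ _p : Fin n × Fin n, (1/(n:ℝ)) = (n:ℝ) := by
      rw [Finset.sum_const, Finset.card_univ]
      simp only [Fintype.card_prod, Fintype.card_fin, nsmul_eq_mul]
      push_cast
      field_simp
    rw [hcst] at hlt
    linarith
  set T : Matrix (Fin n) (Fin n) ℂ := Matrix.single p.1 p.2 (1:ℂ) with hTdef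
  have h1 : (Tᴴ * T).trace = 1 := by
    rw [hTdef, TwoTwoAux.conjTranspose_stdBasisMatrix, TwoTwoAux.trace_stdBasisMatrix_mul]
    simp [Matrix.single_apply_same]
  have hTfrob : frobNorm T = 1 := by
    rw [frobNorm, h1]
    simp
  have h2 : ((Tᴴ * (T - F T)).trace).re = 1 - f p := by
    rw [Matrix.mul_sub, Matrix.trace_sub, Complex.sub_re, h1, hfdef]
    simp [hTdef]
  have hkey : 1 - 1/(n:ℝ) ≤ frobNorm (T - F T) := by
    have hle1 : 1 - 1/(n:ℝ) ≤ 1 - f p := by linarith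
    have hle2 : 1 - f p ≤ frobNorm (T - F T) := by
      calc 1 - f p = ((inner ℂ (TwoTwoAux.V n T) (TwoTwoAux.V n (T - F T)) : ℂ)).re := by
            rw [TwoTwoAux.inner_V, h2]
        _ ≤ ‖TwoTwoAux.V n T‖ * ‖TwoTwoAux.V n (T - F T)‖ := by
            exact re_inner_le_norm (𝕜 := ℂ) _ _
        _ = frobNorm (T - F T) := by
            rw [← TwoTwoAux.frob_eq_norm, ← TwoTwoAux.frob_eq_norm, hTfrob, one_mul]
    linarith
  refine hkey.trans ?_
  exact le_csSup hbdd ⟨T, le_of_eq hTfrob, rfl⟩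
end

section
/- Let H be a finite-dimensional Hilbert space of dimension n. If F: L(H) → L(H) is a unit-preserving completely positive map of the form F(T) = Σ_{i=1}^m ρ_i(T) G_i (states ρ_i, positive G_i of norm ≤ 1 summing to I), then ‖I − F‖_{∞→∞} ≥ n^{−1/2}(1 − 1/n). -/
open scoped ComplexOrder Matrix

/-- `‖F‖_{∞→∞}`: the operator norm of a map on matrices w.r.t. the operator norm. -/
noncomputable def mapInfNorm {n : ℕ}
    (F : Matrix (Fin n) (Fin n) ℂ → Matrix (Fin n) (Fin n) ℂ) : ℝ :=
  sSup {r : ℝ | ∃ T : Matrix (Fin n) (Fin n) ℂ, opNorm T ≤ 1 ∧ r = opNorm (F T)}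

lemma euclid_coord_le {n : ℕ} (w : EuclideanSpace ℂ (Fin n)) (k : Fin n) : ‖w k‖ ≤ ‖w‖ := by
  rw [EuclideanSpace.norm_eq]
  rw [show ‖w k‖ = Real.sqrt (‖w k‖ ^ 2) from (Real.sqrt_sq (norm_nonneg _)).symm]
  exact Real.sqrt_le_sqrt (Finset.single_le_sum (f := fun i => ‖w i‖ ^ 2)
    (fun i _ => sq_nonneg _) (Finset.mem_univ k))


lemma entry_le_opNorm {n : ℕ} (A : Matrix (Fin n) (Fin n) ℂ) (k l : Fin n) :
    ‖A k l‖ ≤ opNorm A := by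
  classical
  have h1 : Matrix.toEuclideanCLM (𝕜 := ℂ) A (EuclideanSpace.single l 1)
      = (WithLp.equiv 2 _).symm (A *ᵥ Pi.single l 1) := by
    rw [show (EuclideanSpace.single l (1:ℂ)) = (WithLp.equiv 2 _).symm (Pi.single l 1) from rfl]
    rfl
  have h2 : ‖A k l‖ ≤ ‖Matrix.toEuclideanCLM (𝕜 := ℂ) A (EuclideanSpace.single l 1)‖ := by
    have := euclid_coord_le (Matrix.toEuclideanCLM (𝕜 := ℂ) A (EuclideanSpace.single l 1)) k
    rw [h1] at this ⊢
    simpa [Matrix.mulVec_single] using this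
  refine h2.trans ?_
  have h3 := (Matrix.toEuclideanCLM (𝕜 := ℂ) A).le_opNorm (EuclideanSpace.single l 1)
  rw [EuclideanSpace.norm_single, norm_one, mul_one] at h3
  exact h3

lemma opNorm_stdBasisMatrix_le {n : ℕ} (k l : Fin n) :
    opNorm (Matrix.single k l 1) ≤ 1 := by
  classical
  refine ContinuousLinearMap.opNorm_le_bound _ zero_le_one fun v => ?_
  have h1 : Matrix.toEuclideanCLM (𝕜 := ℂ) (Matrix.single k l 1) v
      = EuclideanSpace.single k (v l) := by
    ext i
    show (Matrix.single k l 1 *ᵥ (WithLp.equiv 2 _ v)) i = _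
    simp [Matrix.mulVec, dotProduct, Matrix.single, Pi.single_apply,
      EuclideanSpace.single_apply, ite_and, eq_comm]
  rw [h1, EuclideanSpace.norm_single, one_mul]
  exact euclid_coord_le v l


lemma psd_entry_le {n : ℕ} {M : Matrix (Fin n) (Fin n) ℂ} (hM : M.PosSemidef) (k l : Fin n) :
    ‖M k l‖ ≤ Real.sqrt (M k k).re * Real.sqrt (M l l).re := by
  obtain ⟨B, rfl⟩ : ∃ B : Matrix (Fin n) (Fin n) ℂ, M = Bᴴ * B := by
    open scoped MatrixOrder in
    obtain ⟨X, hX, -, rfl⟩ := CFC.exists_sqrt_of_isSelfAdjoint_of_quasispectrumRestricts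
      hM.isHermitian (QuasispectrumRestricts.nnreal_of_nonneg hM.nonneg)
    exact ⟨X, by rw [show Xᴴ = X from hX.star_eq]⟩
  set u : EuclideanSpace ℂ (Fin n) := (WithLp.equiv 2 _).symm (fun j => B j k) with hu
  set v : EuclideanSpace ℂ (Fin n) := (WithLp.equiv 2 _).symm (fun j => B j l) with hv
  have hkl : (Bᴴ * B) k l = inner (𝕜 := ℂ) u v := by
    simp [Matrix.mul_apply, Matrix.conjTranspose_apply, PiLp.inner_apply, hu, hv,
      RCLike.inner_apply]
    exact Finset.sum_congr rfl fun _ _ => mul_comm _ _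
  have hk : Real.sqrt ((Bᴴ * B) k k).re = ‖u‖ := by
    have : ((Bᴴ * B) k k).re = ‖u‖ ^ 2 := by
      rw [show (Bᴴ * B) k k = inner (𝕜 := ℂ) u u by
        simp only [Matrix.mul_apply, Matrix.conjTranspose_apply, PiLp.inner_apply, hu,
          RCLike.inner_apply]
        exact Finset.sum_congr rfl fun _ _ => mul_comm _ _]
      exact inner_self_eq_norm_sq (𝕜 := ℂ) u
    rw [this, Real.sqrt_sq (norm_nonneg _)]
  have hl : Real.sqrt ((Bᴴ * B) l l).re = ‖v‖ := by
    have : ((Bᴴ * B) l l).re = ‖v‖ ^ 2 := by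
      rw [show (Bᴴ * B) l l = inner (𝕜 := ℂ) v v by
        simp only [Matrix.mul_apply, Matrix.conjTranspose_apply, PiLp.inner_apply, hv,
          RCLike.inner_apply]
        exact Finset.sum_congr rfl fun _ _ => mul_comm _ _]
      exact inner_self_eq_norm_sq (𝕜 := ℂ) v
    rw [this, Real.sqrt_sq (norm_nonneg _)]
  rw [hkl, hk, hl]
  exact norm_inner_le_norm u v

lemma psd_diag_nonneg {n : ℕ} {M : Matrix (Fin n) (Fin n) ℂ} (hM : M.PosSemidef) (k : Fin n) :
    0 ≤ (M k k).re := by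
  have := hM.re_dotProduct_nonneg (Pi.single k 1)
  simpa [dotProduct, Matrix.mulVec_single, Pi.single_apply, apply_ite] using this

lemma opNorm_sub_le {n : ℕ} (A B : Matrix (Fin n) (Fin n) ℂ) :
    opNorm (A - B) ≤ opNorm A + opNorm B := by
  unfold opNorm; rw [map_sub]; exact norm_sub_le _ _

lemma trace_stdBasisMatrix_mul {n : ℕ} (k l : Fin n) (M : Matrix (Fin n) (Fin n) ℂ) :
    (Matrix.single k l 1 * M).trace = M l k := by
  classical
  rw [Matrix.trace]
  rw [Finset.sum_eq_single k (fun j _ hj => by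
    simp [Matrix.diag, hj]) (by simp)]
  simp [Matrix.diag]

set_option synthInstance.maxHeartbeats 1000000 in
set_option maxHeartbeats 1600000 in
/-- Let `H` be a finite-dimensional Hilbert space of dimension `n > 0`
(operators modelled as `n × n` matrices).  If `F : L(H) → L(H)` is a unit-preserving
completely positive map of the form `F(T) = Σᵢ tr(T Sᵢ) Gᵢ` (states `Sᵢ`, positive `Gᵢ`
of norm `≤ 1` summing to `I`), then `‖I − F‖_{∞→∞} ≥ n^{-1/2}(1 − 1/n)`. -/
theorem inf_norm_id_sub_abelian_factorizable {n m : ℕ} (hn : 0 < n)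
    (F : Matrix (Fin n) (Fin n) ℂ →ₗ[ℂ] Matrix (Fin n) (Fin n) ℂ)
    (S G : Fin m → Matrix (Fin n) (Fin n) ℂ)
    (hS : ∀ i, (S i).PosSemidef) (hStr : ∀ i, (S i).trace = 1)
    (hG : ∀ i, (G i).PosSemidef) (hGnorm : ∀ i, opNorm (G i) ≤ 1)
    (hGsum : ∑ i, G i = 1)
    (hF : ∀ T, F T = ∑ i, (T * S i).trace • G i) :
    (Real.sqrt n)⁻¹ * (1 - 1 / (n : ℝ)) ≤ mapInfNorm (fun T => T - F T) := by
  classical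
  have hnR : (0:ℝ) < n := by exact_mod_cast hn
  have sdiag : ∀ i k, 0 ≤ ((S i) k k).re := fun i k => psd_diag_nonneg (hS i) k
  have gdiag : ∀ i k, 0 ≤ ((G i) k k).re := fun i k => psd_diag_nonneg (hG i) k
  have strace : ∀ i, ∑ k, ((S i) k k).re = 1 := by
    intro i
    have h1 : ((S i).trace).re = 1 := by rw [hStr i]; simp
    rw [← h1, Matrix.trace, Complex.re_sum]
    rfl
  have gdiag_sum : ∀ l, ∑ i, ((G i) l l).re = 1 := by
    intro l
    have h0 : (∑ i, G i) l l = (1 : Matrix (Fin n) (Fin n) ℂ) l l := by rw [hGsum]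
    rw [Matrix.sum_apply] at h0
    have h1 : (∑ i, (G i) l l).re = 1 := by rw [h0]; simp [Matrix.one_apply]
    rw [← h1, Complex.re_sum]
  -- key averaging bound
  set f : Fin n × Fin n → ℝ := fun p => ∑ i, ‖S i p.2 p.1‖ * ‖G i p.1 p.2‖ with hf_def
  have bound : ∀ (i : Fin m) (k l : Fin n), ‖S i l k‖ * ‖G i k l‖ ≤
      (((S i) k k).re * ((G i) l l).re + ((S i) l l).re * ((G i) k k).re) / 2 := by
    intro i k l
    have h1 := psd_entry_le (hS i) l k
    have h2 := psd_entry_le (hG i) k l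
    have h3 : ‖S i l k‖ * ‖G i k l‖ ≤
        (Real.sqrt ((S i) k k).re * Real.sqrt ((G i) l l).re) *
        (Real.sqrt ((S i) l l).re * Real.sqrt ((G i) k k).re) := by
      calc ‖S i l k‖ * ‖G i k l‖
          ≤ (Real.sqrt ((S i) l l).re * Real.sqrt ((S i) k k).re) *
            (Real.sqrt ((G i) k k).re * Real.sqrt ((G i) l l).re) :=
            mul_le_mul h1 h2 (norm_nonneg _) (by positivity)
        _ = _ := by ring
    refine h3.trans ?_
    have ha2 : (Real.sqrt ((S i) k k).re * Real.sqrt ((G i) l l).re)^2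
        = ((S i) k k).re * ((G i) l l).re := by
      rw [mul_pow, Real.sq_sqrt (sdiag i k), Real.sq_sqrt (gdiag i l)]
    have hb2 : (Real.sqrt ((S i) l l).re * Real.sqrt ((G i) k k).re)^2
        = ((S i) l l).re * ((G i) k k).re := by
      rw [mul_pow, Real.sq_sqrt (sdiag i l), Real.sq_sqrt (gdiag i k)]
    nlinarith [sq_nonneg (Real.sqrt ((S i) k k).re * Real.sqrt ((G i) l l).re
      - Real.sqrt ((S i) l l).re * Real.sqrt ((G i) k k).re)]
  have key : ∑ p : Fin n × Fin n, f p ≤ (n : ℝ) := by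
    calc ∑ p : Fin n × Fin n, f p
        ≤ ∑ p : Fin n × Fin n, ∑ i, ((((S i) p.1 p.1).re * ((G i) p.2 p.2).re
            + ((S i) p.2 p.2).re * ((G i) p.1 p.1).re) / 2) :=
          Finset.sum_le_sum fun p _ => Finset.sum_le_sum fun i _ => bound i p.1 p.2
      _ = ∑ i, ∑ p : Fin n × Fin n, ((((S i) p.1 p.1).re * ((G i) p.2 p.2).re
            + ((S i) p.2 p.2).re * ((G i) p.1 p.1).re) / 2) := Finset.sum_comm
      _ = ∑ i : Fin m, ∑ l, ((G i) l l).re := by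
          refine Finset.sum_congr rfl fun i _ => ?_
          rw [Fintype.sum_prod_type]
          have e1 : ∑ k, ∑ l, ((S i) k k).re * ((G i) l l).re
              = (∑ k, ((S i) k k).re) * (∑ l, ((G i) l l).re) :=
            (Finset.sum_mul_sum _ _ _ _).symm
          have e2 : ∑ k, ∑ l, ((S i) l l).re * ((G i) k k).re
              = (∑ l, ((S i) l l).re) * (∑ k, ((G i) k k).re) := by
            rw [Finset.sum_comm]
            exact (Finset.sum_mul_sum _ _ _ _).symm
          calc ∑ k, ∑ l, ((((S i) k k).re * ((G i) l l).re
                + ((S i) l l).re * ((G i) k k).re) / 2)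
              = ∑ k, ((∑ l, ((S i) k k).re * ((G i) l l).re)
                + (∑ l, ((S i) l l).re * ((G i) k k).re)) / 2 :=
                Finset.sum_congr rfl fun k _ => by
                  rw [← Finset.sum_div, Finset.sum_add_distrib]
            _ = ((∑ k, ∑ l, ((S i) k k).re * ((G i) l l).re)
                + (∑ k, ∑ l, ((S i) l l).re * ((G i) k k).re)) / 2 := by
                rw [← Finset.sum_div, Finset.sum_add_distrib]
            _ = _ := by rw [e1, e2, strace i]; ring
      _ = ∑ l : Fin n, ∑ i : Fin m, ((G i) l l).re := Finset.sum_comm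
      _ = (n : ℝ) := by simp [gdiag_sum]
  -- choose a good pair (k, l)
  have : Nonempty (Fin n) := ⟨⟨0, hn⟩⟩
  obtain ⟨p, -, hp⟩ := Finset.exists_le_of_sum_le (s := (Finset.univ : Finset (Fin n × Fin n)))
    (g := fun _ => 1 / (n : ℝ)) Finset.univ_nonempty (by
      refine key.trans_eq ?_
      rw [Finset.sum_const, Finset.card_univ, Fintype.card_prod, Fintype.card_fin]
      rw [nsmul_eq_mul]
      push_cast
      field_simp)
  obtain ⟨k, l⟩ := p
  set T : Matrix (Fin n) (Fin n) ℂ := Matrix.single k l 1 with hT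
  have hentry : (F T) k l = ∑ i, (S i) l k * (G i) k l := by
    rw [hF T, Matrix.sum_apply]
    refine Finset.sum_congr rfl fun i _ => ?_
    rw [hT, trace_stdBasisMatrix_mul]
    simp
  have hTkl : (T - F T) k l = 1 - ∑ i, (S i) l k * (G i) k l := by
    rw [Matrix.sub_apply, hentry, hT]
    simp
  have hlow : 1 - 1/(n:ℝ) ≤ opNorm (T - F T) := by
    refine le_trans ?_ (entry_le_opNorm _ k l)
    rw [hTkl]
    have hsum : ‖∑ i, (S i) l k * (G i) k l‖ ≤ 1/(n:ℝ) := by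
      refine le_trans (norm_sum_le _ _) (le_trans ?_ hp)
      exact Finset.sum_le_sum fun i _ => (norm_mul _ _).le
    calc 1 - 1/(n:ℝ) ≤ ‖(1:ℂ)‖ - ‖∑ i, (S i) l k * (G i) k l‖ := by
          rw [norm_one]; linarith
      _ ≤ ‖1 - ∑ i, (S i) l k * (G i) k l‖ := norm_sub_norm_le _ _
  -- boundedness of the defining set
  have hBdd : BddAbove {r : ℝ | ∃ T : Matrix (Fin n) (Fin n) ℂ,
      opNorm T ≤ 1 ∧ r = opNorm ((fun T => T - F T) T)} := by
    refine ⟨1 + m * (n^2 : ℝ), fun r hr => ?_⟩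
    obtain ⟨A, hA1, rfl⟩ := hr
    have sentry : ∀ i j k', ‖S i j k'‖ ≤ 1 := by
      intro i j k'
      refine (psd_entry_le (hS i) j k').trans ?_
      have hd : ∀ a, ((S i) a a).re ≤ 1 := by
        intro a
        rw [← strace i]
        exact Finset.single_le_sum (f := fun b => ((S i) b b).re)
          (fun b _ => sdiag i b) (Finset.mem_univ a)
      have h1 := Real.sqrt_le_one.mpr (hd j)
      have h2 := Real.sqrt_le_one.mpr (hd k')
      exact mul_le_one₀ h1 (Real.sqrt_nonneg _) h2
    have htrb : ∀ i, ‖(A * S i).trace‖ ≤ (n^2 : ℝ) := by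
      intro i
      rw [Matrix.trace]
      refine le_trans (norm_sum_le _ _) ?_
      have : ∀ k' : Fin n, ‖(A * S i).diag k'‖ ≤ (n : ℝ) := by
        intro k'
        rw [Matrix.diag, Matrix.mul_apply]
        refine le_trans (norm_sum_le _ _) ?_
        have : ∀ j : Fin n, ‖A k' j * S i j k'‖ ≤ 1 := by
          intro j
          rw [norm_mul]
          exact mul_le_one₀ ((entry_le_opNorm A k' j).trans hA1) (norm_nonneg _)
            (sentry i j k')
        calc ∑ j, ‖A k' j * S i j k'‖ ≤ ∑ _j : Fin n, (1:ℝ) :=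
              Finset.sum_le_sum fun j _ => this j
          _ = (n : ℝ) := by simp
      calc ∑ k', ‖(A * S i).diag k'‖ ≤ ∑ _k' : Fin n, (n:ℝ) :=
            Finset.sum_le_sum fun k' _ => this k'
        _ = (n^2 : ℝ) := by simp; ring
    have hFA : opNorm (F A) ≤ m * (n^2 : ℝ) := by
      rw [hF A]
      unfold opNorm
      rw [map_sum]
      refine le_trans (norm_sum_le _ _) ?_
      calc ∑ i, ‖Matrix.toEuclideanCLM (𝕜 := ℂ) ((A * S i).trace • G i)‖
          ≤ ∑ _i : Fin m, (n^2 : ℝ) := by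
            refine Finset.sum_le_sum fun i _ => ?_
            rw [map_smul]
            refine le_trans (ContinuousLinearMap.opNorm_smul_le _ _) ?_
            calc ‖(A * S i).trace‖ * ‖Matrix.toEuclideanCLM (𝕜 := ℂ) (G i)‖
                ≤ (n^2 : ℝ) * 1 := mul_le_mul (htrb i) (hGnorm i) (norm_nonneg _)
                  (by positivity)
              _ = (n^2 : ℝ) := mul_one _
        _ = m * (n^2:ℝ) := by simp [mul_comm]
    calc opNorm (A - F A) ≤ opNorm A + opNorm (F A) := opNorm_sub_le _ _
      _ ≤ 1 + m * (n^2 : ℝ) := add_le_add hA1 hFA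
  have hmem : opNorm (T - F T) ∈ {r : ℝ | ∃ T : Matrix (Fin n) (Fin n) ℂ,
      opNorm T ≤ 1 ∧ r = opNorm ((fun T => T - F T) T)} :=
    ⟨T, opNorm_stdBasisMatrix_le k l, rfl⟩
  have hsup : opNorm (T - F T) ≤ mapInfNorm (fun T => T - F T) := le_csSup hBdd hmem
  have htarget : (Real.sqrt n)⁻¹ * (1 - 1/(n:ℝ)) ≤ 1 - 1/(n:ℝ) := by
    have h1 : (1:ℝ) ≤ Real.sqrt n := by
      rw [show (1:ℝ) = Real.sqrt 1 by simp]
      exact Real.sqrt_le_sqrt (by exact_mod_cast hn)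
    have h2 : (Real.sqrt n)⁻¹ ≤ 1 := inv_le_one_of_one_le₀ h1
    have h3 : 0 ≤ 1 - 1/(n:ℝ) := by
      have : 1/(n:ℝ) ≤ 1 := by
        rw [div_le_one hnR]; exact_mod_cast hn
      linarith
    nlinarith
  calc (Real.sqrt n)⁻¹ * (1 - 1/(n:ℝ)) ≤ 1 - 1/(n:ℝ) := htarget
    _ ≤ opNorm (T - F T) := hlow
    _ ≤ _ := hsup
end

section
/- Let H be a Hilbert space of dimension ≥ 2, U a unitary on H, and F a unit-preserving completely positive map on L(H) which factors through an abelian von Neumann algebra (F = R ∘ Q with Q: L(H) → B, R: B → L(H) unital completely positive maps and B abelian). Then for any β < √2/4 there exists T ∈ L(H) with ‖U† T U − F(T)‖_∞ ≥ β ‖T‖_∞. -/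
open scoped ComplexOrder InnerProductSpace

/-- A linear map between operator algebras of Hilbert spaces is completely positive iff
for all `k`, all `a : Fin k → L(H)` and all vectors `v : Fin k → K`, the sum
`Σᵢⱼ ⟪vᵢ, F(aᵢ† aⱼ) vⱼ⟫` is nonnegative. -/
def IsCompletelyPositive {H K : Type*}
    [NormedAddCommGroup H] [InnerProductSpace ℂ H] [CompleteSpace H]
    [NormedAddCommGroup K] [InnerProductSpace ℂ K] [CompleteSpace K]
    (F : (H →L[ℂ] H) →ₗ[ℂ] (K →L[ℂ] K)) : Prop :=
  ∀ (k : ℕ) (a : Fin k → (H →L[ℂ] H)) (v : Fin k → K),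
    0 ≤ ∑ i, ∑ j, ⟪v i, (F ((ContinuousLinearMap.adjoint (a i)) * a j)) (v j)⟫_ℂ

namespace AbelianAux

lemma pb1 (x : ℝ) (_ : 0 ≤ x) : x^1 - x^2 ≤ 1/4 := by nlinarith [sq_nonneg (2*x-1)]
lemma pb2 (x : ℝ) (hx : 0 ≤ x) : x^2 - x^3 ≤ 4/27 := by
  nlinarith [sq_nonneg (3*x-2), mul_nonneg (sq_nonneg (3*x-2)) hx]
lemma pb3 (x : ℝ) (hx : 0 ≤ x) : x^3 - x^4 ≤ 27/256 := by
  nlinarith [sq_nonneg (4*x-3), mul_nonneg (sq_nonneg (4*x-3)) hx,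
    mul_nonneg (sq_nonneg (4*x-3)) (mul_nonneg hx hx)]
lemma pb4 (x : ℝ) (hx : 0 ≤ x) : x^4 - x^5 ≤ 256/3125 := by
  nlinarith [sq_nonneg (5*x-4), mul_nonneg (sq_nonneg (5*x-4)) hx,
    mul_nonneg (sq_nonneg (5*x-4)) (mul_nonneg hx hx),
    mul_nonneg (mul_nonneg (sq_nonneg (5*x-4)) hx) (mul_nonneg hx hx)]
lemma pb5 (x : ℝ) (hx : 0 ≤ x) : x^5 - x^6 ≤ 3125/46656 := by
  nlinarith [sq_nonneg (6*x-5), mul_nonneg (sq_nonneg (6*x-5)) hx,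
    mul_nonneg (sq_nonneg (6*x-5)) (mul_nonneg hx hx),
    mul_nonneg (mul_nonneg (sq_nonneg (6*x-5)) hx) (mul_nonneg hx hx),
    mul_nonneg (mul_nonneg (sq_nonneg (6*x-5)) (mul_nonneg hx hx)) (mul_nonneg hx hx)]
lemma pb6 (x : ℝ) (hx : 0 ≤ x) : x^6 - x^7 ≤ 46656/823543 := by
  nlinarith [sq_nonneg (7*x-6), mul_nonneg (sq_nonneg (7*x-6)) hx,
    mul_nonneg (sq_nonneg (7*x-6)) (mul_nonneg hx hx),
    mul_nonneg (mul_nonneg (sq_nonneg (7*x-6)) hx) (mul_nonneg hx hx),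
    mul_nonneg (mul_nonneg (sq_nonneg (7*x-6)) (mul_nonneg hx hx)) (mul_nonneg hx hx),
    mul_nonneg (mul_nonneg (mul_nonneg (sq_nonneg (7*x-6)) hx) (mul_nonneg hx hx)) (mul_nonneg hx hx)]
lemma pb7 (x : ℝ) (hx : 0 ≤ x) : x^7 - x^8 ≤ 823543/16777216 := by
  nlinarith [sq_nonneg (8*x-7), mul_nonneg (sq_nonneg (8*x-7)) hx,
    mul_nonneg (sq_nonneg (8*x-7)) (mul_nonneg hx hx),
    mul_nonneg (mul_nonneg (sq_nonneg (8*x-7)) hx) (mul_nonneg hx hx),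
    mul_nonneg (mul_nonneg (sq_nonneg (8*x-7)) (mul_nonneg hx hx)) (mul_nonneg hx hx),
    mul_nonneg (mul_nonneg (mul_nonneg (sq_nonneg (8*x-7)) hx) (mul_nonneg hx hx)) (mul_nonneg hx hx),
    mul_nonneg (mul_nonneg (mul_nonneg (sq_nonneg (8*x-7)) (mul_nonneg hx hx)) (mul_nonneg hx hx)) (mul_nonneg hx hx)]

lemma commute_cfc' {A : Type*} [CStarAlgebra A] {a b : A} (hab : Commute b a) (f : ℝ → ℝ) :
    Commute b (cfc f a) := by
  refine cfc_cases (fun x => Commute b x) a f (Commute.zero_right b) fun hf ha' => ?_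
  suffices h : ∀ g : C(spectrum ℝ a, ℝ), Commute b (cfcHom ha' g) from h _
  intro g
  have hcont : Continuous (fun g : C(spectrum ℝ a, ℝ) => cfcHom ha' (R := ℝ) g) :=
    (cfcHom_isClosedEmbedding ha').continuous
  induction g using ContinuousMap.induction_on_of_compact with
  | const r =>
    have hc : (ContinuousMap.const (spectrum ℝ a) r) = algebraMap ℝ C(spectrum ℝ a, ℝ) r := rfl
    rw [hc, AlgHomClass.commutes]
    exact (Algebra.commutes r b).symm
  | id => rw [cfcHom_id ha']; exact hab
  | star_id => rw [star_trivial, cfcHom_id ha']; exact hab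
  | add f g hf hg => rw [map_add]; exact hf.add_right hg
  | mul f g hf hg => rw [map_mul]; exact hf.mul_right hg
  | frequently f hf =>
    have hcl : IsClosed {g : C(spectrum ℝ a, ℝ) | Commute b (cfcHom ha' g)} := by
      have hset : {g : C(spectrum ℝ a, ℝ) | Commute b (cfcHom ha' g)}
          = (fun g : C(spectrum ℝ a, ℝ) => b * cfcHom ha' g - cfcHom ha' g * b) ⁻¹' {0} := by
        ext g
        simp [Commute, SemiconjBy, sub_eq_zero]
      rw [hset]
      exact IsClosed.preimage ((continuous_const.mul hcont).sub (hcont.mul continuous_const))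
        isClosed_singleton
    exact hcl.closure_subset (mem_closure_iff_frequently.mpr hf)

lemma inner_self_re {G : Type*} [NormedAddCommGroup G] [InnerProductSpace ℂ G] (x : G) :
    (⟪x, x⟫_ℂ).re = ‖x‖ ^ 2 := by
  rw [inner_self_eq_norm_sq_to_K]; norm_cast

lemma quad_aux {Ac Bc Y : ℂ}
    (h : ∀ c d : ℂ, 0 ≤ ((starRingEnd ℂ) c * c) * Ac + ((starRingEnd ℂ) c * d) * ((starRingEnd ℂ) Y)
        + ((starRingEnd ℂ) d * c) * Y + ((starRingEnd ℂ) d * d) * Bc) :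
    ‖Y‖ ^ 2 ≤ Ac.re * Bc.re := by
  have hA : 0 ≤ Ac := by simpa using h 1 0
  have hB : 0 ≤ Bc := by simpa using h 0 1
  have hAre : 0 ≤ Ac.re := (Complex.le_def.mp hA).1
  have hBre : 0 ≤ Bc.re := (Complex.le_def.mp hB).1
  by_cases hY0 : Y = 0
  · simpa [hY0] using mul_nonneg hAre hBre
  have hr : (‖Y‖:ℂ) ≠ 0 := by
    exact_mod_cast (Complex.ofReal_ne_zero).mpr (norm_ne_zero_iff.mpr hY0)
  have habs : (‖Y‖ : ℂ) ≠ 0 := by exact hr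
  set d : ℂ := -(Y / ‖Y‖) with hd'
  have hdY : (starRingEnd ℂ) d * Y = -(‖Y‖:ℂ) := by
    rw [hd', map_neg, map_div₀, Complex.conj_ofReal, neg_mul, div_mul_eq_mul_div,
      mul_comm, Complex.mul_conj, Complex.normSq_eq_norm_sq, Complex.ofReal_pow]
    rw [neg_eq_iff_eq_neg, neg_neg]
    field_simp
  have hdY' : d * (starRingEnd ℂ) Y = -(‖Y‖:ℂ) := by
    have := congrArg (starRingEnd ℂ) hdY
    simpa [map_neg, mul_comm] using this
  have hdd : (starRingEnd ℂ) d * d = 1 := by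
    rw [hd']
    simp only [map_neg, map_div₀, Complex.conj_ofReal, neg_mul, mul_neg, neg_neg,
      div_mul_div_comm, mul_comm ((starRingEnd ℂ) Y) Y, Complex.mul_conj,
      Complex.normSq_eq_norm_sq]
    rw [div_eq_one_iff_eq (by positivity)]
    push_cast; ring
  have key : ∀ t : ℝ, 0 ≤ Ac.re * (t * t) + (-(2 * ‖Y‖)) * t + Bc.re := by
    intro t
    have h' := h (t:ℂ) d
    have hrw : ((starRingEnd ℂ) (t:ℂ) * (t:ℂ)) * Ac + ((starRingEnd ℂ) (t:ℂ) * d) * ((starRingEnd ℂ) Y)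
        + ((starRingEnd ℂ) d * (t:ℂ)) * Y + ((starRingEnd ℂ) d * d) * Bc
        = ((t * t : ℝ):ℂ) * Ac + ((-(2 * ‖Y‖) * t : ℝ):ℂ) + Bc := by
      rw [Complex.conj_ofReal]
      have e1 : ((t:ℂ) * d) * ((starRingEnd ℂ) Y) = (t:ℂ) * (d * (starRingEnd ℂ) Y) := by ring
      have e2 : ((starRingEnd ℂ) d * (t:ℂ)) * Y = (t:ℂ) * ((starRingEnd ℂ) d * Y) := by ring
      rw [e1, e2, hdY, hdY', hdd]
      push_cast; ring
    rw [hrw] at h'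
    have h2 := (Complex.le_def.mp h').1
    simp only [Complex.add_re, Complex.re_ofReal_mul, Complex.ofReal_re, Complex.zero_re] at h2
    linarith [h2]
  have hd := discrim_le_zero key
  rw [discrim] at hd
  nlinarith [norm_nonneg Y, hd]

open ContinuousLinearMap

section CP
variable {E : Type*} [NormedAddCommGroup E] [InnerProductSpace ℂ E] [CompleteSpace E]
variable {G : Type*} [NormedAddCommGroup G] [InnerProductSpace ℂ G] [CompleteSpace G]
variable {Φ : (E →L[ℂ] E) →ₗ[ℂ] (G →L[ℂ] G)}

lemma single (hΦ : IsCompletelyPositive Φ) (c : E →L[ℂ] E) (v : G) :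
    0 ≤ ⟪v, (Φ (ContinuousLinearMap.adjoint c * c)) v⟫_ℂ := by
  simpa using hΦ 1 (fun _ => c) (fun _ => v)

lemma pair (hΦ : IsCompletelyPositive Φ) (x y : E →L[ℂ] E) (v w : G) :
    0 ≤ ⟪v, (Φ (adjoint x * x)) v⟫_ℂ + ⟪v, (Φ (adjoint x * y)) w⟫_ℂ
      + ⟪w, (Φ (adjoint y * x)) v⟫_ℂ + ⟪w, (Φ (adjoint y * y)) w⟫_ℂ := by
  have := hΦ 2 ![x, y] ![v, w]
  simpa [Fin.sum_univ_two, add_assoc] using this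

lemma conj_symm (hΦ : IsCompletelyPositive Φ) (x y : E →L[ℂ] E) (v w : G) :
    ⟪v, (Φ (adjoint x * y)) w⟫_ℂ = (starRingEnd ℂ) ⟪w, (Φ (adjoint y * x)) v⟫_ℂ := by
  set A := ⟪v, (Φ (adjoint x * x)) v⟫_ℂ with hA'
  set B := ⟪w, (Φ (adjoint y * y)) w⟫_ℂ with hB'
  set X := ⟪v, (Φ (adjoint x * y)) w⟫_ℂ with hX'
  set Y := ⟪w, (Φ (adjoint y * x)) v⟫_ℂ with hY'
  have hAim : A.im = 0 := ((Complex.le_def.mp (single hΦ x v)).2).symm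
  have hBim : B.im = 0 := ((Complex.le_def.mp (single hΦ y w)).2).symm
  have h1 : (A + X + Y + B).im = 0 := ((Complex.le_def.mp (pair hΦ x y v w)).2).symm
  have e1 : ⟪v, (Φ (adjoint x * y)) (Complex.I • w)⟫_ℂ = Complex.I * X := by
    rw [map_smul, inner_smul_right]
  have e2 : ⟪Complex.I • w, (Φ (adjoint y * x)) v⟫_ℂ = -(Complex.I * Y) := by
    rw [inner_smul_left, Complex.conj_I, neg_mul]
  have e3 : ⟪Complex.I • w, (Φ (adjoint y * y)) (Complex.I • w)⟫_ℂ = B := by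
    rw [map_smul, inner_smul_right, inner_smul_left, Complex.conj_I]
    ring_nf
    rw [Complex.I_sq]
    ring
  have h2 : (A + Complex.I * X + -(Complex.I * Y) + B).im = 0 := by
    have := ((Complex.le_def.mp (pair hΦ x y v (Complex.I • w))).2).symm
    rwa [e1, e2, e3] at this
  simp only [Complex.add_im, Complex.neg_im, Complex.mul_im, Complex.I_re, Complex.I_im,
    hAim, hBim] at h1 h2
  apply Complex.ext
  · simp only [Complex.conj_re]; linarith
  · simp only [Complex.conj_im]; linarith

lemma cs (hΦ : IsCompletelyPositive Φ) (x y : E →L[ℂ] E) (v w : G) :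
    ‖⟪w, (Φ (adjoint y * x)) v⟫_ℂ‖ ^ 2
      ≤ (⟪v, (Φ (adjoint x * x)) v⟫_ℂ).re * (⟪w, (Φ (adjoint y * y)) w⟫_ℂ).re := by
  apply quad_aux
  intro c d
  have e : ∀ (S : E →L[ℂ] E) (a b : G) (c d : ℂ),
      ⟪c • a, (Φ S) (d • b)⟫_ℂ = ((starRingEnd ℂ) c * d) * ⟪a, (Φ S) b⟫_ℂ := by
    intro S a b c d
    rw [map_smul, inner_smul_left, inner_smul_right]; ring
  have h := pair hΦ x y (c • v) (d • w)
  rw [e, e, e, e, conj_symm hΦ x y v w] at h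
  exact h

lemma inner_nonneg_of_nonneg (hΦ : IsCompletelyPositive Φ) {S : E →L[ℂ] E}
    (hS : 0 ≤ S) (v : G) : 0 ≤ ⟪v, (Φ S) v⟫_ℂ := by
  rw [StarOrderedRing.nonneg_iff] at hS
  induction hS using AddSubmonoid.closure_induction with
  | mem s hs =>
    obtain ⟨c, rfl⟩ := hs
    simpa only [ContinuousLinearMap.star_eq_adjoint] using single hΦ c v
  | zero => simp
  | add a b _ _ ha hb =>
    rw [map_add]
    simp only [ContinuousLinearMap.add_apply, inner_add_right]
    exact add_nonneg ha hb

lemma norm_apply_le (hΦ : IsCompletelyPositive Φ) (h1 : Φ 1 = 1) (b : E →L[ℂ] E) :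
    ‖Φ b‖ ≤ ‖b‖ := by
  have hb2 : ∀ v : G, (⟪v, (Φ (adjoint b * b)) v⟫_ℂ).re ≤ ‖b‖ ^ 2 * ‖v‖ ^ 2 := by
    intro v
    have hpos : (0 : E →L[ℂ] E) ≤ ((‖b‖ ^ 2 : ℝ) : ℂ) • 1 - adjoint b * b := by
      rw [ContinuousLinearMap.nonneg_iff_isPositive, ContinuousLinearMap.isPositive_def']
      constructor
      · simp only [IsSelfAdjoint, star_sub, star_smul, star_one, star_mul,
          ContinuousLinearMap.star_eq_adjoint, ContinuousLinearMap.adjoint_adjoint,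
          Complex.conj_ofReal, RCLike.star_def]
      · intro x
        rw [ContinuousLinearMap.reApplyInnerSelf]
        simp only [RCLike.re_to_complex, ContinuousLinearMap.sub_apply,
          ContinuousLinearMap.smul_apply,
          ContinuousLinearMap.one_apply, inner_sub_left, inner_smul_left]
        rw [ContinuousLinearMap.mul_apply, ContinuousLinearMap.adjoint_inner_left]
        have hbx := b.le_opNorm x
        simp only [Complex.sub_re, Complex.conj_ofReal, Complex.re_ofReal_mul,
          inner_self_re]
        nlinarith [norm_nonneg (b x), norm_nonneg x, norm_nonneg b]
    have := inner_nonneg_of_nonneg hΦ hpos v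
    have hre := (Complex.le_def.mp this).1
    rw [map_sub, map_smul, h1] at hre
    simp only [ContinuousLinearMap.sub_apply, ContinuousLinearMap.smul_apply,
      ContinuousLinearMap.one_apply, inner_sub_right, inner_smul_right, Complex.sub_re,
      Complex.re_ofReal_mul, inner_self_re, Complex.zero_re] at hre
    linarith
  have key : ∀ v w : G, ‖⟪w, (Φ b) v⟫_ℂ‖ ≤ ‖b‖ * ‖v‖ * ‖w‖ := by
    intro v w
    have hcs := cs hΦ b 1 v w
    rw [show adjoint (1 : E →L[ℂ] E) = 1 from adjoint_id, one_mul, mul_one, h1] at hcs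
    have h2 : (⟪w, (1 : G →L[ℂ] G) w⟫_ℂ).re = ‖w‖ ^ 2 := by
      rw [ContinuousLinearMap.one_apply, inner_self_re]
    rw [h2] at hcs
    have h3 := hb2 v
    have hn : 0 ≤ ‖⟪w, (Φ b) v⟫_ℂ‖ := norm_nonneg _
    nlinarith [norm_nonneg b, norm_nonneg v, norm_nonneg w, hcs, h3,
      mul_nonneg (mul_nonneg (norm_nonneg b) (norm_nonneg v)) (norm_nonneg w)]
  apply ContinuousLinearMap.opNorm_le_bound _ (norm_nonneg b)
  intro v
  have hk := key v ((Φ b) v)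
  have h4 : (⟪(Φ b) v, (Φ b) v⟫_ℂ).re = ‖(Φ b) v‖ ^ 2 := inner_self_re _
  have h5 : ‖(Φ b) v‖ ^ 2 ≤ ‖⟪(Φ b) v, (Φ b) v⟫_ℂ‖ := by
    rw [← h4]; exact Complex.re_le_norm _
  nlinarith [norm_nonneg ((Φ b) v), hk, h5,
    mul_nonneg (norm_nonneg b) (norm_nonneg v)]
end CP

section Ket
variable {H : Type*} [NormedAddCommGroup H] [InnerProductSpace ℂ H] [CompleteSpace H]

noncomputable def ket (a b : H) : H →L[ℂ] H := (innerSL ℂ b).smulRight a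

lemma ket_apply (a b u : H) : ket a b u = ⟪b, u⟫_ℂ • a := rfl

lemma ket_adjoint (a b : H) : adjoint (ket a b) = ket b a := by
  symm
  rw [eq_adjoint_iff]
  intro x y
  simp only [ket_apply, inner_smul_left, inner_smul_right]
  rw [inner_conj_symm]
  ring

lemma ket_mul (a b c d : H) : ket a b * ket c d = ⟪b, c⟫_ℂ • ket a d := by
  ext u
  simp only [ContinuousLinearMap.mul_apply, ket_apply, ContinuousLinearMap.smul_apply,
    inner_smul_right, smul_smul]
  ring_nf

lemma ket_norm_le (a b : H) (ha : ‖a‖ = 1) (hb : ‖b‖ = 1) : ‖ket a b‖ ≤ 1 := by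
  apply ContinuousLinearMap.opNorm_le_bound _ zero_le_one
  intro u
  rw [ket_apply, norm_smul, ha, mul_one, one_mul]
  calc ‖⟪b, u⟫_ℂ‖ ≤ ‖b‖ * ‖u‖ := norm_inner_le_norm b u
  _ = ‖u‖ := by rw [hb, one_mul]

lemma exists_orthonormal_pair (hdim : 2 ≤ Module.rank ℂ H) :
    ∃ e₀ e₁ : H, ‖e₀‖ = 1 ∧ ‖e₁‖ = 1 ∧ ⟪e₀, e₁⟫_ℂ = 0 := by
  have hrank : ¬ (Module.rank ℂ H ≤ 1) := by
    intro h
    have : (2 : Cardinal) ≤ 1 := le_trans hdim h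
    norm_num at this
  rw [rank_le_one_iff] at hrank
  push_neg at hrank
  have hnt : Nontrivial H := by
    by_contra h
    rw [not_nontrivial_iff_subsingleton] at h
    obtain ⟨v, hv⟩ := hrank 0
    exact hv 0 (Subsingleton.elim _ _)
  obtain ⟨x, hx⟩ := exists_ne (0 : H)
  set e₀ : H := (‖x‖⁻¹ : ℝ) • x with he₀def
  have hxn : ‖x‖ ≠ 0 := norm_ne_zero_iff.mpr hx
  have he₀ : ‖e₀‖ = 1 := by
    rw [he₀def, norm_smul]
    simp [abs_of_nonneg, inv_mul_cancel₀ hxn]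
  obtain ⟨y, hy⟩ := hrank e₀
  set z : H := y - ⟪e₀, y⟫_ℂ • e₀ with hzdef
  have hz : z ≠ 0 := by
    intro h
    apply hy ⟪e₀, y⟫_ℂ
    rw [hzdef, sub_eq_zero] at h
    exact h.symm
  have hzn : ‖z‖ ≠ 0 := norm_ne_zero_iff.mpr hz
  have hinner : ⟪e₀, e₀⟫_ℂ = 1 := by
    rw [inner_self_eq_norm_sq_to_K, he₀]; norm_num
  refine ⟨e₀, (‖z‖⁻¹ : ℝ) • z, he₀, ?_, ?_⟩
  · rw [norm_smul]; simp [abs_of_nonneg, inv_mul_cancel₀ hzn]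
  · rw [← Complex.coe_smul, inner_smul_right]
    have hz0 : ⟪e₀, z⟫_ℂ = 0 := by
      rw [hzdef, inner_sub_right, inner_smul_right, hinner]; ring
    rw [hz0, mul_zero]
end Ket

end AbelianAux

set_option maxHeartbeats 4000000 in
/-- Let `H` be a Hilbert space of dimension `≥ 2`, `U` a unitary on `H`,
and `F` a unit-preserving completely positive map on `L(H)` which factors through an
abelian von Neumann algebra `B` (on some Hilbert space `K`), via unital completely
positive maps `Q : L(H) → B` and `R : B → L(H)` with `F = R ∘ Q`.  Then for any
`β < √2/4` there is a (non-zero) `T ∈ L(H)` with `‖U† T U − F(T)‖_∞ ≥ β ‖T‖_∞`. -/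
theorem abelian_factorizable_cannot_approximate_unitary
    {H : Type*} [NormedAddCommGroup H] [InnerProductSpace ℂ H] [CompleteSpace H]
    {K : Type*} [NormedAddCommGroup K] [InnerProductSpace ℂ K] [CompleteSpace K]
    (hdim : 2 ≤ Module.rank ℂ H)
    (U : H →L[ℂ] H) (hU : U ∈ unitary (H →L[ℂ] H))
    (F : (H →L[ℂ] H) →ₗ[ℂ] (H →L[ℂ] H))
    (hF1 : F 1 = 1) (hFCP : IsCompletelyPositive F)
    (B : VonNeumannAlgebra K)
    (habelian : ∀ x ∈ B, ∀ y ∈ B, x * y = y * x)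
    (Q : (H →L[ℂ] H) →ₗ[ℂ] (K →L[ℂ] K)) (R : (K →L[ℂ] K) →ₗ[ℂ] (H →L[ℂ] H))
    (hQrange : ∀ T, Q T ∈ B)
    (hQCP : IsCompletelyPositive Q) (hRCP : IsCompletelyPositive R)
    (hQ1 : Q 1 = 1) (hR1 : R 1 = 1)
    (hfac : ∀ T, F T = R (Q T))
    (β : ℝ) (hβ : β < Real.sqrt 2 / 4) :
    ∃ T : H →L[ℂ] H, T ≠ 0 ∧ β * ‖T‖ ≤ ‖star U * T * U - F T‖ := by
  classical
  open AbelianAux ContinuousLinearMap in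
  obtain ⟨e₀, e₁, he₀, he₁, h01⟩ := AbelianAux.exists_orthonormal_pair hdim
  have h00 : ⟪e₀, e₀⟫_ℂ = 1 := by rw [inner_self_eq_norm_sq_to_K, he₀]; norm_num
  have h11 : ⟪e₁, e₁⟫_ℂ = 1 := by rw [inner_self_eq_norm_sq_to_K, he₁]; norm_num
  have h10 : ⟪e₁, e₀⟫_ℂ = 0 := by rw [← inner_conj_symm, h01, map_zero]
  set p₀ : H →L[ℂ] H := AbelianAux.ket e₀ e₀ with hp₀def
  set p₁ : H →L[ℂ] H := AbelianAux.ket e₁ e₁ with hp₁def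
  set Aop : H →L[ℂ] H := AbelianAux.ket e₁ e₀ with hAdef
  set Aop' : H →L[ℂ] H := AbelianAux.ket e₀ e₁ with hA'def
  have hA'adj : ContinuousLinearMap.adjoint Aop' = Aop := AbelianAux.ket_adjoint e₀ e₁
  have hp₀adj : ContinuousLinearMap.adjoint p₀ = p₀ := AbelianAux.ket_adjoint e₀ e₀
  have hp₁adj : ContinuousLinearMap.adjoint p₁ = p₁ := AbelianAux.ket_adjoint e₁ e₁
  have hp₀p₀ : p₀ * p₀ = p₀ := by rw [hp₀def, AbelianAux.ket_mul, h00, one_smul]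
  have hAp₀ : Aop * p₀ = Aop := by rw [hAdef, hp₀def, AbelianAux.ket_mul, h00, one_smul]
  have hAA' : Aop * Aop' = p₁ := by rw [hAdef, hA'def, AbelianAux.ket_mul, h00, one_smul]
  have hp₁p₁ : p₁ * p₁ = p₁ := by rw [hp₁def, AbelianAux.ket_mul, h11, one_smul]
  set q₀ : K →L[ℂ] K := Q p₀ with hq₀def
  set q₁ : K →L[ℂ] K := Q p₁ with hq₁def
  set m : K →L[ℂ] K := Q Aop with hmdef
  -- commutation from abelianness
  have hm : Commute m q₁ := habelian m (hQrange Aop) q₁ (hQrange p₁)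
  -- q₁ is positive
  have hq₁pos : (0 : K →L[ℂ] K) ≤ q₁ := by
    rw [ContinuousLinearMap.nonneg_iff_isPositive, ContinuousLinearMap.isPositive_def']
    constructor
    · rw [ContinuousLinearMap.isSelfAdjoint_iff']
      symm
      rw [eq_adjoint_iff]
      intro x y
      have h := AbelianAux.conj_symm hQCP p₁ p₁ x y
      rw [hp₁adj, hp₁p₁] at h
      rw [← inner_conj_symm, ← h]
    · intro x
      rw [ContinuousLinearMap.reApplyInnerSelf]
      have h := AbelianAux.single hQCP p₁ x
      rw [hp₁adj, hp₁p₁] at h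
      have := (Complex.le_def.mp h).1
      simp only [RCLike.re_to_complex, Complex.zero_re] at this ⊢
      rw [show ⟪q₁ x, x⟫_ℂ = (starRingEnd ℂ) ⟪x, q₁ x⟫_ℂ from (inner_conj_symm (q₁ x) x).symm,
        Complex.conj_re]
      exact this
  have hq₁sa : IsSelfAdjoint q₁ :=
    ((ContinuousLinearMap.nonneg_iff_isPositive q₁).mp hq₁pos).isSelfAdjoint
  have hspec0 : ∀ x ∈ spectrum ℝ q₁, (0:ℝ) ≤ x := fun x hx =>
    spectrum_nonneg_of_nonneg hq₁pos hx
  -- square root of q₁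
  set r : K →L[ℂ] K := cfc Real.sqrt q₁ with hrdef
  have hrsa : IsSelfAdjoint r := cfc_predicate Real.sqrt q₁
  have hradj : ContinuousLinearMap.adjoint r = r := ContinuousLinearMap.isSelfAdjoint_iff'.mp hrsa
  have hrr : r * r = q₁ := by
    rw [hrdef, ← cfc_mul Real.sqrt Real.sqrt q₁]
    rw [cfc_congr (g := fun x : ℝ => x) (fun x hx => Real.mul_self_sqrt (hspec0 x hx))]
    exact cfc_id' ℝ q₁
  have hcomm : Commute m r := AbelianAux.commute_cfc' hm Real.sqrt
  -- CS inequality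
  have CS1 : ∀ v w : K, ‖⟪w, m v⟫_ℂ‖ ^ 2 ≤ (⟪v, q₀ v⟫_ℂ).re * (⟪w, q₁ w⟫_ℂ).re := by
    intro v w
    have h := AbelianAux.cs hQCP p₀ Aop' v w
    rw [hA'adj, hAp₀, hp₀adj, hp₀p₀, hAA'] at h
    exact h
  -- q₀ + q₁ ≤ 1 as quadratic forms
  have hcproj : ContinuousLinearMap.adjoint (1 - p₀ - p₁) * (1 - p₀ - p₁) = 1 - p₀ - p₁ := by
    have hadj : ContinuousLinearMap.adjoint (1 - p₀ - p₁) = 1 - p₀ - p₁ := by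
      rw [map_sub, map_sub, hp₀adj, hp₁adj]
      congr 1
      congr 1
      exact adjoint_id
    rw [hadj]
    have hp₀p₁ : p₀ * p₁ = 0 := by
      rw [hp₀def, hp₁def, AbelianAux.ket_mul, h01, zero_smul]
    have hp₁p₀ : p₁ * p₀ = 0 := by
      rw [hp₀def, hp₁def, AbelianAux.ket_mul, h10, zero_smul]
    simp only [mul_sub, sub_mul, one_mul, mul_one, hp₀p₀, hp₁p₁, hp₀p₁, hp₁p₀]
    abel
  have hq0le : ∀ w : K, (⟪w, q₀ w⟫_ℂ).re ≤ (⟪w, w⟫_ℂ).re - (⟪w, q₁ w⟫_ℂ).re := by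
    intro w
    have h := AbelianAux.single hQCP (1 - p₀ - p₁) w
    rw [hcproj] at h
    have h' := (Complex.le_def.mp h).1
    rw [map_sub, map_sub, hQ1] at h'
    simp only [ContinuousLinearMap.sub_apply, inner_sub_right, Complex.sub_re,
      ContinuousLinearMap.one_apply, Complex.zero_re] at h'
    linarith
  -- the basic recursion
  have hrec : ∀ w : K, (‖m w‖^2) * (‖m w‖^2) ≤ (⟪w, q₀ w⟫_ℂ).re * ‖m (r w)‖^2 := by
    intro w
    have hcs := CS1 w (m w)
    have h1 : ‖⟪m w, m w⟫_ℂ‖ = ‖m w‖^2 := by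
      rw [inner_self_eq_norm_sq_to_K, norm_pow]
      simp
    have e1 : q₁ (m w) = r (r (m w)) := by rw [← hrr]; rfl
    have e2 : ⟪m w, r (r (m w))⟫_ℂ = ⟪r (m w), r (m w)⟫_ℂ := by
      have h := ContinuousLinearMap.adjoint_inner_right r (m w) (r (m w))
      rwa [hradj] at h
    have e3 : r (m w) = m (r w) := by
      have h := congrArg (fun S : K →L[ℂ] K => S w) hcomm.eq
      simpa only [ContinuousLinearMap.mul_apply] using h.symm
    have h2 : (⟪m w, q₁ (m w)⟫_ℂ).re = ‖m (r w)‖^2 := by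
      rw [e1, e2, e3, AbelianAux.inner_self_re]
    rw [h1, h2] at hcs
    calc (‖m w‖^2) * (‖m w‖^2) = (‖m w‖^2)^2 := by ring
    _ ≤ _ := hcs
  -- norms
  have hp₁norm : ‖p₁‖ ≤ 1 := AbelianAux.ket_norm_le e₁ e₁ he₁ he₁
  have hAnorm : ‖Aop‖ ≤ 1 := AbelianAux.ket_norm_le e₁ e₀ he₁ he₀
  have hq₁norm : ‖q₁‖ ≤ 1 :=
    le_trans (AbelianAux.norm_apply_le hQCP hQ1 p₁) hp₁norm
  have hmnorm1 : ‖m‖ ≤ 1 := le_trans (AbelianAux.norm_apply_le hQCP hQ1 Aop) hAnorm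
  have hrnorm : ‖r‖ ≤ 1 := by
    have hc : ‖star r * r‖ = ‖r‖ * ‖r‖ := CStarRing.norm_star_mul_self
    rw [hrsa.star_eq, hrr] at hc
    nlinarith [norm_nonneg r, hq₁norm, hc]
  -- spectral bound
  have hqspec : ∀ (k : ℕ) (c : ℝ), (∀ x : ℝ, 0 ≤ x → x^k - x^(k+1) ≤ c) →
      ∀ u : K, ‖u‖ = 1 → (⟪u, (q₁^k) u⟫_ℂ).re - (⟪u, (q₁^(k+1)) u⟫_ℂ).re ≤ c := by
    intro k c hpb u hu
    have hXeq : cfc (fun x : ℝ => c - (x^k - x^(k+1))) q₁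
        = algebraMap ℝ (K →L[ℂ] K) c - (q₁^k - q₁^(k+1)) := by
      rw [cfc_sub _ _ q₁, cfc_const c q₁, cfc_sub _ _ q₁, cfc_pow_id q₁, cfc_pow_id q₁]
    have hX : (0 : K →L[ℂ] K) ≤ cfc (fun x : ℝ => c - (x^k - x^(k+1))) q₁ :=
      cfc_nonneg (fun x hx => by linarith [hpb x (hspec0 x hx)])
    rw [hXeq] at hX
    have hP := ((ContinuousLinearMap.nonneg_iff_isPositive _).mp hX).re_inner_nonneg_right u
    have halg : ⟪u, (algebraMap ℝ (K →L[ℂ] K) c) u⟫_ℂ = (c:ℂ) * ⟪u, u⟫_ℂ := by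
      rw [IsScalarTower.algebraMap_apply ℝ ℂ (K →L[ℂ] K), Algebra.algebraMap_eq_smul_one]
      simp only [ContinuousLinearMap.smul_apply, ContinuousLinearMap.one_apply,
        inner_smul_right]
      norm_num [Complex.coe_algebraMap]
    simp only [RCLike.re_to_complex, ContinuousLinearMap.sub_apply, inner_sub_right,
      Complex.sub_re, halg] at hP
    have hu2 : (⟪u, u⟫_ℂ).re = 1 := by rw [AbelianAux.inner_self_re, hu]; norm_num
    have : ((c:ℂ) * ⟪u, u⟫_ℂ).re = c := by
      rw [Complex.re_ofReal_mul, hu2, mul_one]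
    linarith [hP, this.le, this.ge]
  -- powers of r
  have hq₁r2 : q₁ = r^2 := by rw [sq]; exact hrr.symm
  have hpowadj : ∀ k : ℕ, ContinuousLinearMap.adjoint (r^k) = r^k := fun k =>
    ContinuousLinearMap.isSelfAdjoint_iff'.mp (hrsa.pow k)
  have hpowinner : ∀ (k : ℕ) (X : K →L[ℂ] K) (u : K),
      ⟪(r^k) u, X ((r^k) u)⟫_ℂ = ⟪u, ((r^k) * X * (r^k)) u⟫_ℂ := by
    intro k X u
    have h := ContinuousLinearMap.adjoint_inner_right (r^k) u (X ((r^k) u))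
    rw [hpowadj k] at h
    calc ⟪(r^k) u, X ((r^k) u)⟫_ℂ = ⟪u, (r^k) (X ((r^k) u))⟫_ℂ := h.symm
    _ = ⟪u, ((r^k) * X * (r^k)) u⟫_ℂ := by simp [ContinuousLinearMap.mul_apply]
  have hq₁powA : ∀ k : ℕ, (r^k) * (1 : K →L[ℂ] K) * (r^k) = q₁^k := by
    intro k
    rw [mul_one, ← pow_add, hq₁r2, ← pow_mul]
    congr 1
    ring
  have hq₁powB : ∀ k : ℕ, (r^k) * q₁ * (r^k) = q₁^(k+1) := by
    intro k
    rw [hq₁r2, ← pow_add, ← pow_add, ← pow_mul]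
    congr 1
    ring
  -- main bound for unit vectors
  have main : ∀ u : K, ‖u‖ = 1 → ‖m u‖ ≤ 6441/10000 := by
    intro u hu
    have hstep : ∀ k : ℕ, (‖m ((r^k) u)‖^2) * (‖m ((r^k) u)‖^2)
        ≤ (⟪(r^k) u, q₀ ((r^k) u)⟫_ℂ).re * ‖m ((r^(k+1)) u)‖^2 := by
      intro k
      have h := hrec ((r^k) u)
      rwa [show r ((r^k) u) = (r^(k+1)) u by rw [pow_succ']; rfl] at h
    have hqb : ∀ (k : ℕ) (c : ℝ), (∀ x : ℝ, 0 ≤ x → x^k - x^(k+1) ≤ c) →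
        (⟪(r^k) u, q₀ ((r^k) u)⟫_ℂ).re ≤ c := by
      intro k c hpb
      have ha := hq0le ((r^k) u)
      have hIA : ⟪(r^k) u, (r^k) u⟫_ℂ = ⟪u, (q₁^k) u⟫_ℂ := by
        have h := hpowinner k 1 u
        rw [hq₁powA k] at h
        simpa using h
      have hIB : ⟪(r^k) u, q₁ ((r^k) u)⟫_ℂ = ⟪u, (q₁^(k+1)) u⟫_ℂ := by
        have h := hpowinner k q₁ u
        rwa [hq₁powB k] at h
      have hs := hqspec k c hpb u hu
      rw [← hIA, ← hIB] at hs
      linarith [ha, hs]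
    have hkn : ∀ k : ℕ, ‖(r^k) u‖ ≤ 1 := by
      intro k
      induction k with
      | zero => simp [hu]
      | succ n ih =>
        have hrw : (r^(n+1)) u = r ((r^n) u) := by rw [pow_succ']; rfl
        rw [hrw]
        calc ‖r ((r^n) u)‖ ≤ ‖r‖ * ‖(r^n) u‖ := r.le_opNorm _
        _ ≤ 1 * 1 := mul_le_mul hrnorm ih (norm_nonneg _) zero_le_one
        _ = 1 := by norm_num
    have h8 : ‖m ((r^8) u)‖ ≤ 1 := by
      calc ‖m ((r^8) u)‖ ≤ ‖m‖ * ‖(r^8) u‖ := m.le_opNorm _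
      _ ≤ 1 * 1 := mul_le_mul hmnorm1 (hkn 8) (norm_nonneg _) zero_le_one
      _ = 1 := by norm_num
    have h7 : ‖m ((r^7) u)‖ ≤ 4710/10000 := by
      have hs := hstep 7
      have he := hqb 7 (823543/16777216) AbelianAux.pb7
      refine le_of_pow_le_pow_left₀ (n := 4) (by norm_num) (by norm_num) ?_
      nlinarith [hs, he, h8, norm_nonneg (m ((r^8) u)), norm_nonneg (m ((r^7) u))]
    have h6 : ‖m ((r^6) u)‖ ≤ 3350/10000 := by
      have hs := hstep 6
      have he := hqb 6 (46656/823543) AbelianAux.pb6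
      refine le_of_pow_le_pow_left₀ (n := 4) (by norm_num) (by norm_num) ?_
      nlinarith [hs, he, h7, norm_nonneg (m ((r^7) u)), norm_nonneg (m ((r^6) u))]
    have h5 : ‖m ((r^5) u)‖ ≤ 2945/10000 := by
      have hs := hstep 5
      have he := hqb 5 (3125/46656) AbelianAux.pb5
      refine le_of_pow_le_pow_left₀ (n := 4) (by norm_num) (by norm_num) ?_
      nlinarith [hs, he, h6, norm_nonneg (m ((r^6) u)), norm_nonneg (m ((r^5) u))]
    have h4 : ‖m ((r^4) u)‖ ≤ 2904/10000 := by
      have hs := hstep 4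
      have he := hqb 4 (256/3125) AbelianAux.pb4
      refine le_of_pow_le_pow_left₀ (n := 4) (by norm_num) (by norm_num) ?_
      nlinarith [hs, he, h5, norm_nonneg (m ((r^5) u)), norm_nonneg (m ((r^4) u))]
    have h3 : ‖m ((r^3) u)‖ ≤ 3072/10000 := by
      have hs := hstep 3
      have he := hqb 3 (27/256) AbelianAux.pb3
      refine le_of_pow_le_pow_left₀ (n := 4) (by norm_num) (by norm_num) ?_
      nlinarith [hs, he, h4, norm_nonneg (m ((r^4) u)), norm_nonneg (m ((r^3) u))]
    have h2 : ‖m ((r^2) u)‖ ≤ 3439/10000 := by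
      have hs := hstep 2
      have he := hqb 2 (4/27) AbelianAux.pb2
      refine le_of_pow_le_pow_left₀ (n := 4) (by norm_num) (by norm_num) ?_
      nlinarith [hs, he, h3, norm_nonneg (m ((r^3) u)), norm_nonneg (m ((r^2) u))]
    have h1 : ‖m ((r^1) u)‖ ≤ 4147/10000 := by
      have hs := hstep 1
      have he := hqb 1 (1/4) AbelianAux.pb1
      refine le_of_pow_le_pow_left₀ (n := 4) (by norm_num) (by norm_num) ?_
      nlinarith [hs, he, h2, norm_nonneg (m ((r^2) u)), norm_nonneg (m ((r^1) u))]
    have h0 : ‖m ((r^0) u)‖ ≤ 6441/10000 := by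
      have hs := hstep 0
      have he := hqb 0 (1) (fun x hx => by norm_num; linarith)
      refine le_of_pow_le_pow_left₀ (n := 4) (by norm_num) (by norm_num) ?_
      nlinarith [hs, he, h1, norm_nonneg (m ((r^1) u)), norm_nonneg (m ((r^0) u))]
    have : (r^0) u = u := by simp
    rwa [this] at h0
  -- operator norm bound for m
  have hmop : ‖m‖ ≤ 6441/10000 := by
    apply ContinuousLinearMap.opNorm_le_bound _ (by norm_num)
    intro u
    rcases eq_or_ne u 0 with h|h
    · simp [h]
    · have hn : ‖u‖ ≠ 0 := norm_ne_zero_iff.mpr h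
      have h1 : ‖(‖u‖⁻¹ : ℝ) • u‖ = 1 := by
        rw [norm_smul]
        simp [abs_of_nonneg, inv_mul_cancel₀ hn]
      have h2 := main _ h1
      rw [← Complex.coe_smul, map_smul, norm_smul] at h2
      have h3 : ‖((‖u‖⁻¹ : ℝ) : ℂ)‖ = ‖u‖⁻¹ := by
        simp [abs_of_nonneg]
      rw [h3] at h2
      have hpos : (0:ℝ) < ‖u‖ := lt_of_le_of_ne (norm_nonneg u) (Ne.symm hn)
      calc ‖m u‖ = ‖u‖ * (‖u‖⁻¹ * ‖m u‖) := by field_simp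
      _ ≤ ‖u‖ * (6441/10000) := mul_le_mul_of_nonneg_left h2 (norm_nonneg u)
      _ = 6441/10000 * ‖u‖ := by ring
  have hFA : ‖F Aop‖ ≤ 6441/10000 := by
    rw [hfac]
    calc ‖R (Q Aop)‖ ≤ ‖Q Aop‖ := AbelianAux.norm_apply_le hRCP hR1 _
    _ ≤ 6441/10000 := hmop
  -- the unitary part
  set w₀ : H := (star U) e₀ with hw₀def
  set w₁ : H := (star U) e₁ with hw₁def
  have hUstar : U * star U = 1 := (Unitary.mem_iff.mp hU).2
  have hU1 : ∀ x : H, U ((star U) x) = x := by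
    intro x
    have h := congrArg (fun S : H →L[ℂ] H => S x) hUstar
    simpa [ContinuousLinearMap.mul_apply] using h
  have hAct : (star U * Aop * U) w₀ = w₁ := by
    show (star U * Aop * U) ((star U) e₀) = (star U) e₁
    simp only [ContinuousLinearMap.mul_apply]
    rw [hU1 e₀]
    congr 1
    rw [hAdef, AbelianAux.ket_apply, h00, one_smul]
  have hwinner : ∀ x : H, ⟪(star U) x, (star U) x⟫_ℂ = ⟪x, x⟫_ℂ := by
    intro x
    rw [ContinuousLinearMap.star_eq_adjoint, ContinuousLinearMap.adjoint_inner_left,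
      ← ContinuousLinearMap.star_eq_adjoint, hU1 x]
  have hw1norm : ‖w₁‖ ≤ 1 := by
    have h := hwinner e₁
    rw [h11] at h
    have h2 : ‖w₁‖^2 = 1 := by
      rw [← AbelianAux.inner_self_re w₁, hw₁def, h]
      norm_num
    nlinarith [norm_nonneg w₁]
  have hw0norm : ‖w₀‖ ≤ 1 := by
    have h := hwinner e₀
    rw [h00] at h
    have h2 : ‖w₀‖^2 = 1 := by
      rw [← AbelianAux.inner_self_re w₀, hw₀def, h]
      norm_num
    nlinarith [norm_nonneg w₀]
  have hw11 : ⟪w₁, w₁⟫_ℂ = 1 := by rw [hw₁def, hwinner e₁, h11]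
  have hval : ⟪w₁, ((star U * Aop * U) - F Aop) w₀⟫_ℂ = 1 - ⟪w₁, (F Aop) w₀⟫_ℂ := by
    rw [ContinuousLinearMap.sub_apply, inner_sub_right, hAct, hw11]
  have hFAb : ‖⟪w₁, (F Aop) w₀⟫_ℂ‖ ≤ 6441/10000 := by
    calc ‖⟪w₁, (F Aop) w₀⟫_ℂ‖ ≤ ‖w₁‖ * ‖(F Aop) w₀‖ := norm_inner_le_norm _ _
    _ ≤ ‖w₁‖ * (‖F Aop‖ * ‖w₀‖) :=
        mul_le_mul_of_nonneg_left ((F Aop).le_opNorm w₀) (norm_nonneg _)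
    _ ≤ 1 * (6441/10000 * 1) := by
        apply mul_le_mul hw1norm _ (by positivity) zero_le_one
        exact mul_le_mul hFA hw0norm (norm_nonneg _) (by norm_num)
    _ = 6441/10000 := by norm_num
  have hlow : (3559/10000 : ℝ) ≤ ‖star U * Aop * U - F Aop‖ := by
    set S := star U * Aop * U - F Aop with hSdef
    have h1 : ‖⟪w₁, S w₀⟫_ℂ‖ ≤ ‖S‖ := by
      calc ‖⟪w₁, S w₀⟫_ℂ‖ ≤ ‖w₁‖ * ‖S w₀‖ := norm_inner_le_norm _ _
      _ ≤ ‖w₁‖ * (‖S‖ * ‖w₀‖) :=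
          mul_le_mul_of_nonneg_left (S.le_opNorm w₀) (norm_nonneg _)
      _ ≤ 1 * (‖S‖ * 1) := by
          apply mul_le_mul hw1norm _ (by positivity) zero_le_one
          exact mul_le_mul_of_nonneg_left hw0norm (norm_nonneg S)
      _ = ‖S‖ := by ring
    have h2 : (3559/10000 : ℝ) ≤ ‖⟪w₁, S w₀⟫_ℂ‖ := by
      rw [hSdef, hval]
      calc (3559/10000:ℝ) = 1 - 6441/10000 := by norm_num
      _ ≤ 1 - ‖⟪w₁, (F Aop) w₀⟫_ℂ‖ := by linarith [hFAb]
      _ = ‖(1:ℂ)‖ - ‖⟪w₁, (F Aop) w₀⟫_ℂ‖ := by simp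
      _ ≤ ‖1 - ⟪w₁, (F Aop) w₀⟫_ℂ‖ := norm_sub_norm_le _ _
    linarith
  refine ⟨Aop, ?_, ?_⟩
  · intro h
    have hz : Aop e₀ = 0 := by rw [h]; rfl
    rw [hAdef, AbelianAux.ket_apply, h00, one_smul] at hz
    rw [hz] at he₁
    simp at he₁
  · rcases le_or_gt β 0 with hb|hb
    · calc β * ‖Aop‖ ≤ 0 := mul_nonpos_of_nonpos_of_nonneg hb (norm_nonneg _)
      _ ≤ ‖star U * Aop * U - F Aop‖ := norm_nonneg _
    · have hs2 : Real.sqrt 2 ≤ 1.4236 := by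
        rw [show (1.4236:ℝ) = Real.sqrt (1.4236^2) from (Real.sqrt_sq (by norm_num)).symm]
        exact Real.sqrt_le_sqrt (by norm_num)
      have hβ' : β ≤ 3559/10000 := by
        have hq : Real.sqrt 2 / 4 ≤ 3559/10000 := by nlinarith [hs2]
        linarith [hβ]
      calc β * ‖Aop‖ ≤ β * 1 := mul_le_mul_of_nonneg_left hAnorm hb.le
      _ = β := mul_one β
      _ ≤ 3559/10000 := hβ'
      _ ≤ ‖star U * Aop * U - F Aop‖ := hlow
end

section
/- A unit-preserving completely positive map F: A → A on a unital C*-algebra A factors through a finite-dimensional abelian von Neumann algebra if and only if there exist unital positive linear functionals ρ_1, …, ρ_m on A and positive elements G_1, …, G_m ∈ A of norm ≤ 1 with Σ_{i=1}^m G_i = I such that F(T) = Σ_{i=1}^m ρ_i(T) G_i for all T ∈ A. -/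
open scoped ComplexOrder

/-- A linear map between (ordered) star algebras is completely positive iff for every
`k`, `a : Fin k → A` and `b : Fin k → B`, `Σᵢⱼ bᵢ* F(aᵢ* aⱼ) bⱼ ≥ 0`. -/
def IsCPMap {A B : Type*} [Ring A] [StarRing A] [Algebra ℂ A]
    [Ring B] [StarRing B] [PartialOrder B] [Algebra ℂ B]
    (F : A →ₗ[ℂ] B) : Prop :=
  ∀ (k : ℕ) (a : Fin k → A) (b : Fin k → B),
    0 ≤ ∑ i, ∑ j, star (b i) * F (star (a i) * a j) * b j

lemma aux_starModule {A : Type*} [NormedRing A] [StarRing A] [CStarRing A] [NormedAlgebra ℂ A]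
    [PartialOrder A] [StarOrderedRing A] : StarModule ℂ A := by
  have hreal : ∀ (r : ℝ) (x : A), star ((r : ℂ) • x) = (r : ℂ) • star x := by
    intro r x
    have h1 : Continuous fun r : ℝ => star ((r : ℂ) • x) :=
      continuous_star.comp (Continuous.smul Complex.continuous_ofReal continuous_const)
    have h2 : Continuous fun r : ℝ => (r : ℂ) • star x :=
      Continuous.smul Complex.continuous_ofReal continuous_const
    have key : (fun r : ℝ => star ((r : ℂ) • x)) = fun r : ℝ => (r : ℂ) • star x := by
      refine DenseRange.equalizer Rat.denseRange_cast h1 h2 (funext fun q => ?_)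
      show star ((((q : ℝ) : ℂ)) • x) = (((q : ℝ) : ℂ)) • star x
      rw [show (((q : ℝ) : ℂ)) = ((q : ℂ)) by push_cast; ring]
      exact map_ratCast_smul (starAddEquiv : A ≃+ A) ℂ ℂ q x
    exact congrFun key r
  have hsma : ∀ y : A, Complex.I • y = (Complex.I • (1 : A)) * y := by
    intro y; rw [smul_mul_assoc, one_mul]
  set w : A := star (Complex.I • (1 : A)) with hw
  have hws : star w = Complex.I • (1 : A) := star_star _
  have hII : (Complex.I • (1 : A)) * (Complex.I • (1 : A)) = -1 := by
    rw [smul_mul_assoc, mul_smul_comm, one_mul, smul_smul, Complex.I_mul_I, neg_smul, one_smul]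
  have hww : w * w = -1 := by
    have := congrArg star hII
    rwa [star_mul, star_neg, star_one] at this
  set a : A := Complex.I • w with ha
  have has : star a = a := by
    rw [ha, hsma w, star_mul, hws, ← hw, ← hsma w]
  have haa : a * a = 1 := by
    rw [ha, smul_mul_assoc, mul_smul_comm, smul_smul, Complex.I_mul_I, hww, neg_smul, one_smul,
      neg_neg]
  set f : A := (2⁻¹ : ℂ) • (1 - a) with hf
  have hfs : star f = f := by
    rw [hf, show ((2⁻¹ : ℂ)) = (((2⁻¹ : ℝ) : ℂ)) by push_cast; ring, hreal, star_sub, star_one, has]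
  have h1a : (1 - a) * (1 - a) = (2 : ℂ) • (1 - a) := by
    have : (1 - a) * (1 - a) = 1 - a - a + a * a := by noncomm_ring
    rw [this, haa, smul_sub, show ((2:ℂ) • (1:A)) = 1 + 1 by rw [two_smul],
      show ((2:ℂ) • a) = a + a by rw [two_smul]]
    abel
  have hff : f * f = f := by
    rw [hf, smul_mul_assoc, mul_smul_comm, smul_smul, h1a, smul_smul]
    norm_num
  have hfpos : (0 : A) ≤ f := by
    have := star_mul_self_nonneg f
    rwa [hfs, hff] at this
  have hfa : f * a = -f := by
    rw [hf, smul_mul_assoc, sub_mul, one_mul, haa, ← smul_neg, neg_sub]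
  have hwa : w = (-Complex.I) • a := by
    rw [ha, smul_smul]
    norm_num [Complex.I_mul_I]
  set x : A := Complex.I • f with hx
  have hxs : star x = x := by
    rw [hx, hsma f, star_mul, hfs, ← hw, hwa, mul_smul_comm, hfa, smul_neg, neg_smul, neg_neg,
      ← hsma f]
  have hxx : x * x = -f := by
    rw [hx, smul_mul_assoc, mul_smul_comm, smul_smul, Complex.I_mul_I, hff, neg_smul, one_smul]
  have hfneg : (0 : A) ≤ -f := by
    have := star_mul_self_nonneg x
    rwa [hxs, hxx] at this
  have hf0 : f = 0 := le_antisymm (neg_nonneg.mp hfneg) hfpos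
  have ha1 : a = 1 := by
    rw [hf, smul_eq_zero] at hf0
    rcases hf0 with h | h
    · norm_num at h
    · exact (sub_eq_zero.mp h).symm
  have hI : star (Complex.I • (1 : A)) = (-Complex.I) • (1 : A) := by
    rw [← hw, hwa, ha1]
  have hIx : ∀ y : A, star (Complex.I • y) = (-Complex.I) • star y := by
    intro y
    rw [hsma y, star_mul, hI, mul_smul_comm, mul_one]
  refine ⟨fun c y => ?_⟩
  calc star (c • y) = star (((c.re : ℂ) + (c.im : ℂ) * Complex.I) • y) := by
        rw [Complex.re_add_im]
    _ = star ((c.re : ℂ) • y) + star ((c.im : ℂ) • (Complex.I • y)) := by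
        rw [add_smul, star_add, mul_smul]
    _ = (c.re : ℂ) • star y + (c.im : ℂ) • ((-Complex.I) • star y) := by
        rw [hreal, hreal, hIx]
    _ = ((c.re : ℂ) + (c.im : ℂ) * (-Complex.I)) • star y := by
        rw [smul_smul, ← add_smul]
    _ = star c • star y := by
        congr 1
        apply Complex.ext <;> simp

lemma aux_norm_le_one {A : Type*} [NormedRing A] [StarRing A] [CStarRing A] [NormedAlgebra ℂ A]
    [CompleteSpace A] [PartialOrder A] [StarOrderedRing A] [StarModule ℂ A]
    {a : A} (ha : 0 ≤ a) (ha1 : a ≤ 1) : ‖a‖ ≤ 1 := by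
  letI : CStarAlgebra A :=
    { ‹NormedRing A›, ‹StarRing A›, ‹CStarRing A›, ‹NormedAlgebra ℂ A›, ‹CompleteSpace A›,
      ‹StarModule ℂ A› with }
  rcases subsingleton_or_nontrivial A with h | h
  · simp [Subsingleton.elim a 0]
  · calc ‖a‖ ≤ ‖(1 : A)‖ := CStarAlgebra.norm_le_norm_of_nonneg_of_le ha ha1
      _ = 1 := norm_one

lemma aux_map_nonneg {B : Type*} [Ring B] [StarRing B] [PartialOrder B] [Algebra ℂ B]
    [StarOrderedRing B] {M : Type*} [AddCommMonoid M] [PartialOrder M]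
    [CovariantClass M M (· + ·) (· ≤ ·)] [Module ℂ M]
    (L : B →ₗ[ℂ] M) (hL : ∀ s : B, 0 ≤ L (star s * s)) {b : B} (hb : 0 ≤ b) : 0 ≤ L b := by
  rw [StarOrderedRing.nonneg_iff] at hb
  induction hb using AddSubmonoid.closure_induction with
  | mem x hx => obtain ⟨s, rfl⟩ := hx; exact hL s
  | zero => simp
  | add x y _ _ hx hy => rw [map_add]; exact add_nonneg hx hy

/-- A unit-preserving completely positive map `F : A → A` on a unital
C*-algebra factors through a finite-dimensional abelian von Neumann algebra (modelled,
up to isomorphism, as `ℂ^m = Fin m → ℂ`) via unital completely positive maps `Q, R`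
iff there exist unital positive linear functionals `ρ₁, …, ρ_m` on `A` and positive
`G₁, …, G_m ∈ A` of norm `≤ 1` with `Σᵢ Gᵢ = 1` and `F(T) = Σᵢ ρᵢ(T) Gᵢ` for all `T`. -/
theorem abelian_factorization_characterization
    {A : Type*} [NormedRing A] [StarRing A] [CStarRing A] [NormedAlgebra ℂ A]
    [CompleteSpace A] [PartialOrder A] [StarOrderedRing A]
    (F : A →ₗ[ℂ] A) (hF1 : F 1 = 1) (hFCP : IsCPMap F) :
    (∃ (m : ℕ) (Q : A →ₗ[ℂ] (Fin m → ℂ)) (R : (Fin m → ℂ) →ₗ[ℂ] A),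
        IsCPMap Q ∧ IsCPMap R ∧ Q 1 = 1 ∧ R 1 = 1 ∧ ∀ T, F T = R (Q T)) ↔
    (∃ (m : ℕ) (ρ : Fin m → (A →ₗ[ℂ] ℂ)) (G : Fin m → A),
        (∀ i, ρ i 1 = 1) ∧ (∀ i (a : A), 0 ≤ a → 0 ≤ ρ i a) ∧
        (∀ i, 0 ≤ G i) ∧ (∀ i, ‖G i‖ ≤ 1) ∧ (∑ i, G i = 1) ∧
        ∀ T, F T = ∑ i, ρ i T • G i) := by
  letI : StarModule ℂ A := aux_starModule
  constructor
  · rintro ⟨m, Q, R, hQCP, hRCP, hQ1, hR1, hFQR⟩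
    set G : Fin m → A := fun i => R (Pi.single i 1) with hG
    have hRpos : ∀ s : Fin m → ℂ, 0 ≤ R (star s * s) := by
      intro s
      simpa using hRCP 1 (fun _ => s) (fun _ => 1)
    have hsingle : ∀ i : Fin m,
        star (Pi.single i 1 : Fin m → ℂ) * Pi.single i 1 = Pi.single i 1 := by
      intro i
      funext j
      by_cases h : j = i <;> simp [Pi.single_apply, h]
    have hGpos : ∀ i, 0 ≤ G i := by
      intro i
      have := hRpos (Pi.single i 1)
      rwa [hsingle] at this
    have hGsum : ∑ i, G i = 1 := by
      rw [hG, ← map_sum, show (∑ i, (Pi.single i 1 : Fin m → ℂ)) = 1 from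
        Finset.univ_sum_single (1 : Fin m → ℂ), hR1]
    have hGle : ∀ i, G i ≤ 1 := by
      intro i
      rw [← hGsum]
      exact Finset.single_le_sum (fun j _ => hGpos j) (Finset.mem_univ i)
    refine ⟨m, fun i => (LinearMap.proj i).comp Q, G, ?_, ?_, hGpos,
      fun i => aux_norm_le_one (hGpos i) (hGle i), hGsum, ?_⟩
    · intro i
      simp [hQ1]
    · intro i a haa
      have hQpos : ∀ s : A, 0 ≤ Q (star s * s) := by
        intro s
        simpa using hQCP 1 (fun _ => s) (fun _ => 1)
      have h := aux_map_nonneg Q hQpos haa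
      simpa using h i
    · intro T
      rw [hFQR T]
      have hQT : Q T = ∑ i, (Q T i) • (Pi.single i 1 : Fin m → ℂ) := by
        funext j
        simp [Finset.sum_apply, Pi.single_apply, mul_ite]
      rw [hQT, map_sum]
      simp only [map_smul, LinearMap.coe_comp, Function.comp_apply, LinearMap.proj_apply]
      rfl
  · rintro ⟨m, ρ, G, hρ1, hρpos, hGpos, _, hGsum, hFdec⟩
    set R : (Fin m → ℂ) →ₗ[ℂ] A :=
      ∑ i, ((LinearMap.proj i : (Fin m → ℂ) →ₗ[ℂ] ℂ).smulRight (G i)) with hR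
    have hRapp : ∀ v : Fin m → ℂ, R v = ∑ i, v i • G i := by
      intro v
      rw [hR]
      simp [LinearMap.sum_apply, LinearMap.smulRight_apply]
    refine ⟨m, LinearMap.pi ρ, R, ?_, ?_, ?_, ?_, ?_⟩
    · -- Q is CP
      intro k a b
      rw [Pi.le_def]
      intro t
      simp only [Pi.zero_apply, Finset.sum_apply, Pi.mul_apply, Pi.star_apply,
        LinearMap.pi_apply]
      set c : A := ∑ i, (b i t) • a i with hc
      have hcc : star c * c = ∑ i, ∑ j, (star (b i t) * b j t) • (star (a i) * a j) := by
        rw [hc, star_sum]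
        simp only [star_smul]
        rw [Finset.sum_mul_sum]
        refine Finset.sum_congr rfl fun i _ => Finset.sum_congr rfl fun j _ => ?_
        rw [smul_mul_smul_comm]
      have hterm : ∀ i j, star (b i t) * (ρ t) (star (a i) * a j) * b j t
          = (ρ t) ((star (b i t) * b j t) • (star (a i) * a j)) := by
        intro i j
        rw [map_smul, smul_eq_mul]
        ring
      simp_rw [hterm, ← map_sum, ← hcc]
      exact hρpos t _ (star_mul_self_nonneg c)
    · -- R is CP
      intro k a b
      have h1 : ∀ i j, star (b i) * R (star (a i) * a j) * b j
          = ∑ t, (star (a i t) * a j t) • (star (b i) * G t * b j) := by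
        intro i j
        rw [hRapp, Finset.mul_sum, Finset.sum_mul]
        refine Finset.sum_congr rfl fun t _ => ?_
        simp only [Pi.mul_apply, Pi.star_apply]
        rw [mul_smul_comm, smul_mul_assoc]
      have h2 : ∀ t, star (∑ i, a i t • b i) * G t * (∑ j, a j t • b j)
          = ∑ i, ∑ j, (star (a i t) * a j t) • (star (b i) * G t * b j) := by
        intro t
        rw [star_sum]
        simp only [star_smul]
        rw [Finset.sum_mul, Finset.sum_mul]
        refine Finset.sum_congr rfl fun i _ => ?_
        rw [Finset.mul_sum]
        refine Finset.sum_congr rfl fun j _ => ?_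
        rw [smul_mul_assoc, smul_mul_assoc, mul_smul_comm, smul_smul]
      calc (0 : A) ≤ ∑ t, star (∑ i, a i t • b i) * G t * (∑ j, a j t • b j) :=
            Finset.sum_nonneg fun t _ => star_left_conjugate_nonneg (hGpos t) _
        _ = ∑ t, ∑ i, ∑ j, (star (a i t) * a j t) • (star (b i) * G t * b j) :=
            Finset.sum_congr rfl fun t _ => h2 t
        _ = ∑ i, ∑ j, ∑ t, (star (a i t) * a j t) • (star (b i) * G t * b j) := by
            rw [Finset.sum_comm]
            exact Finset.sum_congr rfl fun i _ => Finset.sum_comm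
        _ = ∑ i, ∑ j, star (b i) * R (star (a i) * a j) * b j :=
            Finset.sum_congr rfl fun i _ => Finset.sum_congr rfl fun j _ => (h1 i j).symm
    · funext t
      simp [hρ1]
    · rw [hRapp]
      simp [hGsum]
    · intro T
      rw [hFdec T, hRapp]
      rfl
end
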